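/- arXiv:0910.1022 — 4 statements merged into one kernel-verified Lean document; each statement's English description precedes it below -/
import Mathlib

section
/- Fix N ≥ 1 customers with sequential distances d(i,j) ∈ [0,∞] satisfying the relaxed triangle inequality for d̄(i,j) = min(d(i,j), d(j,i)). Let A be one of ∅, {0}, or [0,∞), let a > 0, let the decay function be f(x) = a·1[x ∈ A], and let α > 0. Let B_1,…,B_K be the partition of {1,…,N} in which distinct i,j share a block iff d̄(i,j) ∈ A, and for i ∈ {1,…,N} let k(i) denote the index with i ∈ B_{k(i)}. Then under the ddCRP with decay f and parameter α: (1) every assignment vector c with c_i ∉ B_{k(i)} for some i has probability zero; and (2) the probability of any assignment c with c_i ∈ B_{k(i)} for all i factorizes as P(c) = ∏_{k=1}^K P^{(k)}(c restricted to B_k), where P^{(k)} is the ddCRP probability on the customers of B_k alone with the restricted distances, decay f, and parameter α. -/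
open scoped BigOperators ENNReal Classical

noncomputable section

/-- Weight that customer `i` assigns to linking to customer `j`: `α` for a
self-link (`j = i`) and `f (d i j)` otherwise. -/
def ddcrpWeight {N : ℕ} (d : Fin N → Fin N → ℝ≥0∞) (f : ℝ≥0∞ → ℝ) (α : ℝ)
    (i j : Fin N) : ℝ :=
  if j = i then α else f (d i j)

/-- ddCRP probability of the assignment `c` for the sub-system consisting of the
customers in `S` (with the restricted distances). -/
def ddcrpProbOn {N : ℕ} (S : Finset (Fin N)) (d : Fin N → Fin N → ℝ≥0∞)
    (f : ℝ≥0∞ → ℝ) (α : ℝ) (c : Fin N → Fin N) : ℝ :=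
  ∏ i ∈ S, ddcrpWeight d f α i (c i) / (α + ∑ j ∈ S.erase i, f (d i j))

/-- ddCRP probability of the assignment `c` (all `N` customers). -/
def ddcrpProb {N : ℕ} (d : Fin N → Fin N → ℝ≥0∞) (f : ℝ≥0∞ → ℝ) (α : ℝ)
    (c : Fin N → Fin N) : ℝ :=
  ddcrpProbOn Finset.univ d f α c

/-- `sameTable c i j`: the finest equivalence relation relating each customer `a`
to `c a` holds between `i` and `j`. -/
def sameTable {N : ℕ} (c : Fin N → Fin N) : Fin N → Fin N → Prop :=
  Relation.EqvGen fun a b => b = c a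

/-- The induced table partition `z(c)`: the set of equivalence classes of the
finest equivalence relation relating each `i` to `c i`. -/
def tablePartition {N : ℕ} (c : Fin N → Fin N) : Set (Set (Fin N)) :=
  {B | ∃ i : Fin N, B = {j | sameTable c i j}}

/-- for sequential distances satisfying the relaxed triangle
inequality, decay `f = a · 1[· ∈ A]` with `A ∈ {∅, {0}, [0,∞)}`, the ddCRP puts
probability zero on any assignment linking a customer outside its block
`B_{k(i)} = {j | i = j ∨ d̄(i,j) ∈ A}`, and on assignments that link within blocks
the probability factorizes over the blocks as a product of ddCRP probabilities of
the restricted assignments on the customers of each block alone. -/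
theorem stmt1 {N : ℕ} (hN : 1 ≤ N) (d : Fin N → Fin N → ℝ≥0∞)
    (hseq : ∀ i j : Fin N, i < j → d i j = ⊤)
    (htri : ∀ i j k : Fin N,
      (min (d i j) (d j i) = 0 → min (d j k) (d k j) = 0 → min (d i k) (d k i) = 0) ∧
      (min (d i j) (d j i) ≠ ⊤ → min (d j k) (d k j) ≠ ⊤ → min (d i k) (d k i) ≠ ⊤))
    (A : Set ℝ≥0∞) (hA : A = ∅ ∨ A = {0} ∨ A = {x : ℝ≥0∞ | x ≠ ⊤})
    (a α : ℝ) (ha : 0 < a) (hα : 0 < α)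
    (f : ℝ≥0∞ → ℝ) (hf : f = A.indicator fun _ => a)
    (c : Fin N → Fin N) :
    ((∃ i : Fin N, ¬ (i = c i ∨ min (d i (c i)) (d (c i) i) ∈ A)) →
        ddcrpProb d f α c = 0) ∧
    ((∀ i : Fin N, i = c i ∨ min (d i (c i)) (d (c i) i) ∈ A) →
      ddcrpProb d f α c =
        ∏ B ∈ Finset.univ.image (fun i : Fin N =>
            Finset.univ.filter fun j : Fin N => i = j ∨ min (d i j) (d j i) ∈ A),
          ddcrpProbOn B d f α c) := by
  classical
  -- block of i
  set Bl : Fin N → Finset (Fin N) :=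
    fun i => Finset.univ.filter fun j : Fin N => i = j ∨ min (d i j) (d j i) ∈ A with hBl
  have hdown : ∀ x y : ℝ≥0∞, x ∈ A → min x y ∈ A := by
    rcases hA with h | h | h <;> subst h <;> intro x y hx
    · exact hx.elim
    · simp only [Set.mem_singleton_iff] at hx ⊢; simp [hx]
    · simp only [Set.mem_setOf_eq] at hx ⊢
      exact (lt_of_le_of_lt (min_le_left x y) hx.lt_top).ne
  have hfzero : ∀ i j : Fin N, ¬ (i = j ∨ min (d i j) (d j i) ∈ A) → f (d i j) = 0 := by
    intro i j h
    have hnA : d i j ∉ A := fun hm => h (Or.inr (hdown _ _ hm))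
    simp [hf, Set.indicator_of_notMem hnA]
  have hsymm : ∀ i j : Fin N, (i = j ∨ min (d i j) (d j i) ∈ A) →
      (j = i ∨ min (d j i) (d i j) ∈ A) := by
    intro i j h
    rcases h with rfl | hm
    · exact Or.inl rfl
    · exact Or.inr (by rwa [min_comm])
  have htrans : ∀ i j k : Fin N, (i = j ∨ min (d i j) (d j i) ∈ A) →
      (j = k ∨ min (d j k) (d k j) ∈ A) → (i = k ∨ min (d i k) (d k i) ∈ A) := by
    intro i j k h1 h2
    rcases h1 with rfl | hm1
    · exact h2
    rcases h2 with rfl | hm2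
    · exact Or.inr hm1
    right
    rcases hA with h | h | h
    · subst h; exact hm1.elim
    · subst h
      simp only [Set.mem_singleton_iff] at hm1 hm2 ⊢
      exact (htri i j k).1 hm1 hm2
    · subst h
      simp only [Set.mem_setOf_eq] at hm1 hm2 ⊢
      exact (htri i j k).2 hm1 hm2
  have hmemBl : ∀ i : Fin N, i ∈ Bl i := by
    intro i; simp [hBl]
  have hBeq : ∀ i j : Fin N, (i = j ∨ min (d i j) (d j i) ∈ A) → Bl i = Bl j := by
    intro i j hij
    ext k
    simp only [hBl, Finset.mem_filter, Finset.mem_univ, true_and]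
    constructor
    · intro hik; exact htrans j i k (hsymm i j hij) hik
    · intro hjk; exact htrans i j k hij hjk
  have hfiber : ∀ i : Fin N, (Finset.univ.filter fun j : Fin N => Bl j = Bl i) = Bl i := by
    intro i
    ext j
    simp only [Finset.mem_filter, Finset.mem_univ, true_and]
    constructor
    · intro hji
      have : j ∈ Bl j := hmemBl j
      rw [hji] at this
      simpa [hBl] using this
    · intro hj
      have hij : i = j ∨ min (d i j) (d j i) ∈ A := by simpa [hBl] using hj
      exact (hBeq i j hij).symm
  -- sums over universe restrict to blocks
  have hsum : ∀ i : Fin N,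
      ∑ j ∈ Finset.univ.erase i, f (d i j) = ∑ j ∈ (Bl i).erase i, f (d i j) := by
    intro i
    refine (Finset.sum_subset (Finset.erase_subset_erase i (Finset.subset_univ _)) ?_).symm
    intro j hj hj'
    have hji : j ≠ i := (Finset.mem_erase.mp hj).1
    have : j ∉ Bl i := fun h => hj' (Finset.mem_erase.mpr ⟨hji, h⟩)
    exact hfzero i j (by simpa [hBl] using this)
  -- unconditional factorization
  have key : ddcrpProb d f α c =
      ∏ B ∈ Finset.univ.image Bl, ddcrpProbOn B d f α c := by
    unfold ddcrpProb ddcrpProbOn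
    have h1 : ∏ i : Fin N,
        ddcrpWeight d f α i (c i) / (α + ∑ j ∈ Finset.univ.erase i, f (d i j)) =
        ∏ i : Fin N,
        ddcrpWeight d f α i (c i) / (α + ∑ j ∈ (Bl i).erase i, f (d i j)) := by
      refine Finset.prod_congr rfl fun i _ => ?_
      rw [hsum i]
    rw [h1]
    rw [← Finset.prod_fiberwise_of_maps_to (g := Bl) (t := Finset.univ.image Bl)
      (fun i _ => Finset.mem_image_of_mem Bl (Finset.mem_univ i))]
    refine Finset.prod_congr rfl fun B hB => ?_
    obtain ⟨i0, -, rfl⟩ := Finset.mem_image.mp hB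
    rw [hfiber i0]
    refine Finset.prod_congr rfl fun i hi => ?_
    have hBi : Bl i = Bl i0 := by
      have hij : i0 = i ∨ min (d i0 i) (d i i0) ∈ A := by simpa [hBl] using hi
      exact (hBeq i0 i hij).symm
    rw [hBi]
  constructor
  · rintro ⟨i, hi⟩
    unfold ddcrpProb ddcrpProbOn
    refine Finset.prod_eq_zero (Finset.mem_univ i) ?_
    have hne : c i ≠ i := fun h => hi (Or.inl h.symm)
    have : ddcrpWeight d f α i (c i) = 0 := by
      rw [ddcrpWeight, if_neg hne]
      exact hfzero i (c i) hi
    rw [this, zero_div]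
  · intro _
    exact key
end
end

section
/- Fix N ≥ 1 customers with sequential distances d(i,j) ∈ [0,∞] satisfying the relaxed triangle inequality for d̄(i,j) = min(d(i,j), d(j,i)). Let A be one of ∅, {0}, or [0,∞), let a > 0, let the decay function be f(x) = a·1[x ∈ A], and let α > 0. Let B_1,…,B_K be the partition of {1,…,N} in which distinct i,j share a block iff d̄(i,j) ∈ A. Then for every partition π of {1,…,N}, the probability under the ddCRP with decay f and parameter α that the induced table partition z(c) equals π is: 0 if some block of π is not contained in any B_k; and otherwise equal to ∏_{k=1}^K [ (α/a)^{|π_k|} · ∏_{C ∈ π_k} (|C|−1)! / ∏_{i=0}^{|B_k|−1} (α/a + i) ], where π_k = {C ∈ π : C ⊆ B_k} is the restriction of π to B_k. -/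
open scoped BigOperators ENNReal Classical

noncomputable section

namespace DdcrpAux

variable {N : ℕ}

def rnk (B : Finset (Fin N)) (i : Fin N) : ℕ := (B.filter (· < i)).card

lemma rnk_lt (B : Finset (Fin N)) {i : Fin N} (hi : i ∈ B) : rnk B i < B.card := by
  apply Finset.card_lt_card
  rw [Finset.ssubset_iff_of_subset (Finset.filter_subset _ _)]
  exact ⟨i, hi, by simp⟩

lemma rnk_eq_zero_iff (B : Finset (Fin N)) (i : Fin N) :
    rnk B i = 0 ↔ ∀ j ∈ B, i ≤ j := by
  simp only [rnk, Finset.card_eq_zero, Finset.filter_eq_empty_iff]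
  constructor
  · intro h j hj; exact le_of_not_gt (h hj)
  · intro h j hj; exact not_lt_of_ge (h j hj)

lemma prod_rnk (B : Finset (Fin N)) (g : ℕ → ℝ) :
    ∏ i ∈ B, g (rnk B i) = ∏ t ∈ Finset.range B.card, g t := by
  induction B using Finset.strongInduction with
  | _ B ih =>
    rcases B.eq_empty_or_nonempty with rfl | hB
    · simp
    · have hmax : B.max' hB ∈ B := B.max'_mem hB
      have herase : B = insert (B.max' hB) (B.erase (B.max' hB)) := by
        rw [Finset.insert_erase hmax]
      have hcard : (B.erase (B.max' hB)).card = B.card - 1 :=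
        Finset.card_erase_of_mem hmax
      have hBpos : 0 < B.card := Finset.card_pos.mpr hB
      -- rank of max is card - 1
      have hrmax : rnk B (B.max' hB) = B.card - 1 := by
        have : B.filter (· < B.max' hB) = B.erase (B.max' hB) := by
          ext j
          simp only [Finset.mem_filter, Finset.mem_erase]
          constructor
          · rintro ⟨hj, hlt⟩; exact ⟨ne_of_lt hlt, hj⟩
          · rintro ⟨hne, hj⟩; exact ⟨hj, lt_of_le_of_ne (B.le_max' j hj) hne⟩
        rw [rnk, this, hcard]
      have hrother : ∀ i ∈ B.erase (B.max' hB), rnk B i = rnk (B.erase (B.max' hB)) i := by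
        intro i hi
        have : B.filter (· < i) = (B.erase (B.max' hB)).filter (· < i) := by
          ext j
          simp only [Finset.mem_filter, Finset.mem_erase]
          constructor
          · rintro ⟨hj, hlt⟩
            refine ⟨⟨?_, hj⟩, hlt⟩
            rintro rfl
            exact absurd (lt_of_lt_of_le hlt (B.le_max' i (Finset.mem_of_mem_erase hi)))
              (lt_irrefl _)
          · rintro ⟨⟨_, hj⟩, hlt⟩; exact ⟨hj, hlt⟩
        rw [rnk, this, rnk]
      rw [← Finset.prod_erase_mul B _ hmax, hrmax]
      rw [Finset.prod_congr rfl (fun i hi => by rw [hrother i hi]),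
        ih (B.erase (B.max' hB)) (Finset.erase_ssubset hmax), hcard]
      have : B.card = (B.card - 1) + 1 := (Nat.succ_pred_eq_of_pos hBpos).symm
      conv_rhs => rw [this, Finset.prod_range_succ]


def root (c : Fin N → Fin N) (i : Fin N) : Fin N := c^[N] i

variable {c : Fin N → Fin N}

lemma iterate_le (hc : ∀ i, c i ≤ i) (i : Fin N) : ∀ k, c^[k] i ≤ i := by
  intro k
  induction k with
  | zero => simp
  | succ k ih =>
    rw [Function.iterate_succ_apply']
    exact le_trans (hc _) ih

lemma root_le (hc : ∀ i, c i ≤ i) (i : Fin N) : root c i ≤ i := iterate_le hc i N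

lemma root_fixed (hc : ∀ i, c i ≤ i) (i : Fin N) : c (root c i) = root c i := by
  have key : ∀ k, c (c^[k] i) = c^[k] i ∨ (c^[k+1] i).val + (k+1) ≤ i.val := by
    intro k
    induction k with
    | zero =>
      rcases eq_or_lt_of_le (hc i) with h | h
      · left; simpa using h
      · right; simpa using Nat.succ_le_of_lt h
    | succ k ih =>
      rcases ih with h | h
      · left
        rw [Function.iterate_succ_apply', h, h]
      · rcases eq_or_lt_of_le (hc (c^[k+1] i)) with h2 | h2
        · left; exact h2
        · right
          rw [Function.iterate_succ_apply']
          have : (c (c^[k+1] i)).val + 1 ≤ (c^[k+1] i).val := Nat.succ_le_of_lt h2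
          omega
  rcases key N with h | h
  · exact h
  · exact absurd h (by have := i.isLt; omega)

lemma root_fix_self {i : Fin N} (h : c i = i) : root c i = i :=
  Function.iterate_fixed h N

lemma root_apply (hc : ∀ i, c i ≤ i) (i : Fin N) : root c (c i) = root c i := by
  have : root c (c i) = c^[N+1] i := by
    rw [root, ← Function.iterate_succ_apply]
  rw [this, Function.iterate_succ_apply', ← root, root_fixed hc]

lemma root_eq_of_fixed {i : Fin N} (h : c i = i) : root c i = i := root_fix_self h

lemma sameTable_iterate (i : Fin N) (k : ℕ) : sameTable c i (c^[k] i) := by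
  induction k with
  | zero => exact Relation.EqvGen.refl i
  | succ k ih =>
    refine Relation.EqvGen.trans _ _ _ ih ?_
    rw [Function.iterate_succ_apply']
    exact Relation.EqvGen.rel _ _ rfl

lemma sameTable_iff_root (hc : ∀ i, c i ≤ i) (i j : Fin N) :
    sameTable c i j ↔ root c i = root c j := by
  constructor
  · intro h
    induction h with
    | rel x y hxy => rw [hxy, root_apply hc]
    | refl x => rfl
    | symm x y _ ih => exact ih.symm
    | trans x y z _ _ ih1 ih2 => exact ih1.trans ih2
  · intro h
    have h1 : sameTable c i (root c i) := sameTable_iterate i N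
    have h2 : sameTable c j (root c j) := sameTable_iterate j N
    rw [← h] at h2
    exact Relation.EqvGen.trans _ _ _ h1 (Relation.EqvGen.symm _ _ h2)


/-- product of the CRP numerators over one table -/
lemma prod_crp_num (α a : ℝ) : ∀ n : ℕ, 1 ≤ n →
    ∏ t ∈ Finset.range n, (if t = 0 then α else a * (t : ℝ))
      = α * a ^ (n - 1) * ((n - 1).factorial : ℝ) := by
  intro n hn
  induction n with
  | zero => omega
  | succ n ih =>
    rcases Nat.eq_or_lt_of_le hn with h | h
    · simp [← h]
    · have hn1 : 1 ≤ n := by omega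
      rw [Finset.prod_range_succ, ih hn1]
      have hne : n ≠ 0 := by omega
      simp only [if_neg hne, Nat.succ_sub_one]
      have : n = (n - 1) + 1 := by omega
      rw [this] at *
      rw [Nat.factorial_succ]
      push_cast
      ring

end DdcrpAux

open DdcrpAux

/-- for sequential distances satisfying the relaxed triangle inequality
and decay `f = a · 1[· ∈ A]`, the ddCRP probability that the induced table partition
equals a given partition `π` of `{1, …, N}` is zero if some block of `π` is not
contained in one of the blocks `B₁, …, B_K` determined by `A`, and otherwise equals
`∏_k (α/a)^{|π_k|} · ∏_{C ∈ π_k} (|C| - 1)! / ∏_{i=0}^{|B_k|-1} (α/a + i)` where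
`π_k = {C ∈ π : C ⊆ B_k}`. -/
theorem stmt2 {N : ℕ} (hN : 1 ≤ N) (d : Fin N → Fin N → ℝ≥0∞)
    (hseq : ∀ i j : Fin N, i < j → d i j = ⊤)
    (htri : ∀ i j k : Fin N,
      (min (d i j) (d j i) = 0 → min (d j k) (d k j) = 0 → min (d i k) (d k i) = 0) ∧
      (min (d i j) (d j i) ≠ ⊤ → min (d j k) (d k j) ≠ ⊤ → min (d i k) (d k i) ≠ ⊤))
    (A : Set ℝ≥0∞) (hA : A = ∅ ∨ A = {0} ∨ A = {x : ℝ≥0∞ | x ≠ ⊤})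
    (a α : ℝ) (ha : 0 < a) (hα : 0 < α)
    (f : ℝ≥0∞ → ℝ) (hf : f = A.indicator fun _ => a)
    (π : Finset (Finset (Fin N)))
    (hπne : ∀ C ∈ π, C.Nonempty)
    (hπpart : ∀ i : Fin N, ∃! C, C ∈ π ∧ i ∈ C)
    (blocks : Finset (Finset (Fin N)))
    (hblocks : blocks = Finset.univ.image (fun i : Fin N =>
        Finset.univ.filter fun j : Fin N => i = j ∨ min (d i j) (d j i) ∈ A))
    (prob : ℝ)
    (hprob : prob = ∑ c : Fin N → Fin N,
        Set.indicator
          {c | tablePartition c = {S : Set (Fin N) | ∃ C ∈ π, S = (C : Set (Fin N))}}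
          (ddcrpProb d f α) c) :
    ((∃ C ∈ π, ∀ B ∈ blocks, ¬ C ⊆ B) → prob = 0) ∧
    ((∀ C ∈ π, ∃ B ∈ blocks, C ⊆ B) →
      prob = ∏ B ∈ blocks,
        ((α / a) ^ (π.filter (· ⊆ B)).card *
            ∏ C ∈ π.filter (· ⊆ B), ((C.card - 1).factorial : ℝ)) /
          ∏ i ∈ Finset.range B.card, (α / a + (i : ℝ))) := by
  classical
  -- the relation R
  set R : Fin N → Fin N → Prop := fun i j => i = j ∨ min (d i j) (d j i) ∈ A with hR
  have hRrefl : ∀ i, R i i := fun i => Or.inl rfl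
  have hRsymm : ∀ i j, R i j → R j i := by
    intro i j h
    rcases h with h | h
    · exact Or.inl h.symm
    · right; rwa [min_comm]
  have hRtrans : ∀ i j k, R i j → R j k → R i k := by
    intro i j k hij hjk
    rcases hij with rfl | hij
    · exact hjk
    rcases hjk with rfl | hjk
    · exact Or.inr hij
    right
    rcases hA with rfl | rfl | rfl
    · exact absurd hij (Set.notMem_empty _)
    · exact (htri i j k).1 hij hjk
    · exact (htri i j k).2 hij hjk
  -- value of f
  have hftop : f ⊤ = 0 := by
    rw [hf]
    rcases hA with rfl | rfl | rfl
    · simp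
    · simp [Set.indicator]
    · simp [Set.indicator]
  have hfval : ∀ i j : Fin N, j ≠ i →
      f (d i j) = if j < i ∧ R i j then a else 0 := by
    intro i j hji
    rcases lt_or_gt_of_ne hji with hlt | hgt
    · have hdji : d j i = ⊤ := hseq j i hlt
      have hmin : min (d i j) (d j i) = d i j := by simp [hdji]
      by_cases hmem : d i j ∈ A
      · rw [if_pos ⟨hlt, Or.inr (by rw [hmin]; exact hmem)⟩, hf, Set.indicator_of_mem hmem]
      · rw [if_neg, hf, Set.indicator_of_notMem hmem]
        rintro ⟨-, h⟩
        rcases h with h | h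
        · exact hji h.symm
        · rw [hmin] at h; exact hmem h
    · have h0 : f (d i j) = 0 := by rw [hseq i j hgt]; exact hftop
      rw [h0, if_neg]
      rintro ⟨h, -⟩
      exact absurd hgt (not_lt_of_gt h)
  -- the ddCRP blocks
  set Bf : Fin N → Finset (Fin N) := fun i => Finset.univ.filter (fun j => R i j) with hBf
  have hmemBf : ∀ i j, j ∈ Bf i ↔ R i j := by
    intro i j; simp [hBf]
  have hBfself : ∀ i, i ∈ Bf i := fun i => (hmemBf i i).2 (hRrefl i)
  have hBfeq : ∀ i j, R i j → Bf i = Bf j := by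
    intro i j h
    ext k
    simp only [hmemBf]
    exact ⟨fun h2 => hRtrans _ _ _ (hRsymm _ _ h) h2, fun h2 => hRtrans _ _ _ h h2⟩
  have hblocks' : blocks = Finset.univ.image Bf := by
    rw [hblocks]
  -- π blocks
  choose Cblk hCblk using fun i => (hπpart i).exists
  have hCmem : ∀ i, Cblk i ∈ π := fun i => (hCblk i).1
  have hCself : ∀ i, i ∈ Cblk i := fun i => (hCblk i).2
  have hCuniq : ∀ (i : Fin N) (C : Finset (Fin N)), C ∈ π → i ∈ C → C = Cblk i :=
    fun i C h1 h2 => (hπpart i).unique ⟨h1, h2⟩ ⟨hCmem i, hCself i⟩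
  -- denominators
  set D : Fin N → ℝ := fun i => α + ∑ j ∈ (Finset.univ : Finset (Fin N)).erase i, f (d i j)
    with hDdef
  have hD : ∀ i, D i = α + a * rnk (Bf i) i := by
    intro i
    rw [hDdef]
    dsimp only
    congr 1
    rw [Finset.sum_congr rfl (fun j hj => hfval i j (Finset.ne_of_mem_erase hj)),
      ← Finset.sum_filter, Finset.sum_const, nsmul_eq_mul, mul_comm]
    congr 2
    unfold rnk
    congr 1
    ext j
    simp only [Finset.mem_filter, Finset.mem_erase, Finset.mem_univ, true_and, and_true, hmemBf]
    constructor
    · rintro ⟨-, hlt, hr⟩; exact ⟨hr, hlt⟩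
    · rintro ⟨hr, hlt⟩; exact ⟨ne_of_lt hlt, hlt, hr⟩
  have hDpos : ∀ i, 0 < D i := by
    intro i
    rw [hD i]
    have : (0:ℝ) ≤ a * rnk (Bf i) i := by positivity
    linarith
  -- per-coordinate factor
  set g : Fin N → Fin N → ℝ := fun i j => ddcrpWeight d f α i j / D i with hg
  have hprod : ∀ c : Fin N → Fin N, ddcrpProb d f α c = ∏ i, g i (c i) := by
    intro c; rfl
  -- nonzero probability forces admissibility
  have hadm : ∀ c : Fin N → Fin N, ddcrpProb d f α c ≠ 0 →
      ∀ i, c i = i ∨ (c i < i ∧ R i (c i)) := by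
    intro c hne i
    rw [hprod] at hne
    have hfac := Finset.prod_ne_zero_iff.mp hne i (Finset.mem_univ i)
    have hw : ddcrpWeight d f α i (c i) ≠ 0 := by
      intro h0
      apply hfac
      rw [hg]
      dsimp only
      rw [h0, zero_div]
    unfold ddcrpWeight at hw
    by_cases hci : c i = i
    · exact Or.inl hci
    · right
      rw [if_neg hci, hfval i (c i) hci] at hw
      by_contra hcon
      rw [if_neg hcon] at hw
      exact hw rfl
  -- target partition
  set πhat : Set (Set (Fin N)) := {S : Set (Fin N) | ∃ C ∈ π, S = (C : Set (Fin N))}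
    with hπhat
  -- "good" links
  set S : Fin N → Finset (Fin N) := fun i =>
    if (∀ j ∈ Cblk i, i ≤ j) then {i} else (Cblk i).filter (· < i) with hS
  -- Good implies the partition is πhat
  have hgood_tp : ∀ c : Fin N → Fin N, (∀ i, c i ∈ S i) → tablePartition c = πhat := by
    intro c hc
    have spec : ∀ i, c i ∈ Cblk i ∧ c i ≤ i ∧ (c i = i ↔ ∀ j ∈ Cblk i, i ≤ j) := by
      intro i
      have h := hc i
      rw [hS] at h
      dsimp only at h
      by_cases hm : ∀ j ∈ Cblk i, i ≤ j
      · rw [if_pos hm, Finset.mem_singleton] at h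
        exact ⟨by rw [h]; exact hCself i, le_of_eq h, ⟨fun _ => hm, fun _ => h⟩⟩
      · rw [if_neg hm, Finset.mem_filter] at h
        exact ⟨h.1, le_of_lt h.2,
          ⟨fun he => absurd h.2 (by rw [he]; exact lt_irrefl i), fun hmm => absurd hmm hm⟩⟩
    have hcle : ∀ i, c i ≤ i := fun i => (spec i).2.1
    have keyC : ∀ n : ℕ, ∀ i : Fin N, i.val < n →
        root c i ∈ Cblk i ∧ Cblk (root c i) = Cblk i := by
      intro n
      induction n with
      | zero => intro i h; omega
      | succ n ih =>
        intro i hi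
        by_cases hfix : c i = i
        · rw [root_fix_self hfix]
          exact ⟨hCself i, rfl⟩
        · have hlt : c i < i := lt_of_le_of_ne (hcle i) hfix
          have hCeq : Cblk (c i) = Cblk i :=
            (hCuniq (c i) (Cblk i) (hCmem i) (spec i).1).symm
          have hroot : root c (c i) = root c i := root_apply hcle i
          have hih := ih (c i) (by omega)
          rw [← hroot, ← hCeq]
          exact hih
    have hrootC : ∀ i : Fin N, root c i ∈ Cblk i ∧ Cblk (root c i) = Cblk i :=
      fun i => keyC N i i.isLt
    have hrootmin : ∀ i : Fin N, ∀ j ∈ Cblk i, root c i ≤ j := by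
      intro i j hj
      have hfix : c (root c i) = root c i := root_fixed hcle i
      have := ((spec (root c i)).2.2).1 hfix
      rw [(hrootC i).2] at this
      exact this j hj
    have hroot_iff : ∀ i j : Fin N, root c i = root c j ↔ Cblk i = Cblk j := by
      intro i j
      constructor
      · intro h
        calc Cblk i = Cblk (root c i) := (hrootC i).2.symm
          _ = Cblk (root c j) := by rw [h]
          _ = Cblk j := (hrootC j).2
      · intro h
        have h1 : root c i ∈ Cblk j := h ▸ (hrootC i).1
        have h2 : root c j ∈ Cblk i := h.symm ▸ (hrootC j).1
        exact le_antisymm (hrootmin i _ h2) (hrootmin j _ h1)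
    have hclass : ∀ i : Fin N, {j | sameTable c i j} = ((Cblk i : Finset (Fin N)) : Set (Fin N)) := by
      intro i
      ext j
      simp only [Set.mem_setOf_eq, Finset.coe_sort_coe, Finset.mem_coe]
      rw [sameTable_iff_root hcle]
      constructor
      · intro h
        rw [(hroot_iff i j).1 h]
        exact hCself j
      · intro hj
        rw [hroot_iff]
        exact hCuniq j (Cblk i) (hCmem i) hj
    ext Sset
    simp only [tablePartition, hπhat, Set.mem_setOf_eq]
    constructor
    · rintro ⟨i, rfl⟩
      exact ⟨Cblk i, hCmem i, hclass i⟩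
    · rintro ⟨C, hC, rfl⟩
      obtain ⟨i, hi⟩ := hπne C hC
      refine ⟨i, ?_⟩
      rw [hclass i, hCuniq i C hC hi]
  -- admissible + partition = πhat implies good
  have htp_good : ∀ c : Fin N → Fin N, (∀ i, c i = i ∨ (c i < i ∧ R i (c i))) →
      tablePartition c = πhat → ∀ i, c i ∈ S i := by
    intro c hadm' htp i
    have hcle : ∀ i, c i ≤ i := fun i => (hadm' i).elim le_of_eq (fun h => le_of_lt h.1)
    have hclassmem : {j | sameTable c i j} ∈ tablePartition c := ⟨i, rfl⟩
    rw [htp] at hclassmem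
    obtain ⟨C, hC, hCeq⟩ := hclassmem
    have hiC : i ∈ C := by
      have : i ∈ {j | sameTable c i j} := Relation.EqvGen.refl i
      rw [hCeq] at this
      exact_mod_cast this
    have hCC : C = Cblk i := hCuniq i C hC hiC
    have hciC : c i ∈ Cblk i := by
      have : c i ∈ {j | sameTable c i j} := Relation.EqvGen.rel _ _ rfl
      rw [hCeq, hCC] at this
      exact_mod_cast this
    rw [hS]
    dsimp only
    by_cases hm : ∀ j ∈ Cblk i, i ≤ j
    · rw [if_pos hm, Finset.mem_singleton]
      exact le_antisymm (hcle i) (hm _ hciC)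
    · rw [if_neg hm, Finset.mem_filter]
      refine ⟨hciC, ?_⟩
      rcases hadm' i with heq | hlt
      · exfalso
        push_neg at hm
        obtain ⟨j, hjC, hji⟩ := hm
        have hjst : sameTable c i j := by
          have : j ∈ ((Cblk i : Finset (Fin N)) : Set (Fin N)) := by exact_mod_cast hjC
          rw [← hCC, ← hCeq] at this
          exact this
        have hre := (sameTable_iff_root hcle i j).1 hjst
        rw [root_fix_self heq] at hre
        have : root c j ≤ j := root_le hcle j
        rw [← hre] at this
        exact absurd (lt_of_le_of_lt this hji) (lt_irrefl i)
      · exact hlt.1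
  -- good + admissible implies every π-block is inside a ddCRP block
  have hgood_contained : ∀ c : Fin N → Fin N, (∀ i, c i ∈ S i) →
      (∀ i, c i = i ∨ (c i < i ∧ R i (c i))) →
      ∀ C ∈ π, ∃ B ∈ blocks, C ⊆ B := by
    intro c hgood hadm' C hC
    have hCne := hπne C hC
    set m := C.min' hCne with hm
    refine ⟨Bf m, by rw [hblocks']; exact Finset.mem_image_of_mem _ (Finset.mem_univ m), ?_⟩
    have key : ∀ n : ℕ, ∀ i : Fin N, i ∈ C → i.val < n → R m i := by
      intro n
      induction n with
      | zero => intro i _ h; omega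
      | succ n ih =>
        intro i hiC hn
        have hCC : C = Cblk i := hCuniq i C hC hiC
        have hg := hgood i
        rw [hS] at hg
        dsimp only at hg
        by_cases hmin : ∀ j ∈ Cblk i, i ≤ j
        · have h1 : i ≤ m := hmin m (hCC ▸ C.min'_mem hCne)
          have h2 : m ≤ i := C.min'_le i hiC
          have : i = m := le_antisymm h1 h2
          rw [this]
          exact hRrefl m
        · rw [if_neg hmin, Finset.mem_filter] at hg
          obtain ⟨hciC, hcilt⟩ := hg
          have hcine : c i ≠ i := ne_of_lt hcilt
          have hRici : R i (c i) := by
            rcases hadm' i with heq | hlt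
            · exact absurd heq hcine
            · exact hlt.2
          have hciC' : c i ∈ C := hCC ▸ hciC
          have hrec : R m (c i) := ih (c i) hciC' (by
            have := hcilt
            omega)
          exact hRtrans m (c i) i hrec (hRsymm _ _ hRici)
    intro i hiC
    exact (hmemBf m i).2 (key N i hiC i.isLt)
  constructor
  · -- case 1
    rintro ⟨C, hC, hCnot⟩
    rw [hprob]
    apply Finset.sum_eq_zero
    intro c _
    by_cases hmem : c ∈ {c | tablePartition c = πhat}
    · rw [Set.indicator_of_mem hmem]
      by_contra hne
      have h1 := hadm c hne
      have h2 := htp_good c h1 hmem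
      obtain ⟨B, hB, hCB⟩ := hgood_contained c h2 h1 C hC
      exact hCnot B hB hCB
    · exact Set.indicator_of_notMem hmem _
  · -- case 2
    intro hcase2
    -- block structure
    have hBfblocks : ∀ i, Bf i ∈ blocks := by
      intro i
      rw [hblocks']
      exact Finset.mem_image_of_mem _ (Finset.mem_univ i)
    have hblk_eq : ∀ (i : Fin N) (B : Finset (Fin N)), B ∈ blocks → i ∈ B → B = Bf i := by
      intro i B hB hiB
      rw [hblocks'] at hB
      obtain ⟨i0, -, rfl⟩ := Finset.mem_image.1 hB
      exact hBfeq i0 i ((hmemBf i0 i).1 hiB)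
    have hCsubBf : ∀ i, Cblk i ⊆ Bf i := by
      intro i
      obtain ⟨B, hB, hsub⟩ := hcase2 (Cblk i) (hCmem i)
      rwa [hblk_eq i B hB (hsub (hCself i))] at hsub
    -- the per-customer numerator
    set num : Fin N → ℝ := fun i => if (∀ j ∈ Cblk i, i ≤ j) then α else a * rnk (Cblk i) i
      with hnum
    have hsum : ∀ i, ∑ j ∈ S i, g i j = num i / D i := by
      intro i
      rw [hS, hnum]
      dsimp only
      by_cases hm : ∀ j ∈ Cblk i, i ≤ j
      · rw [if_pos hm, if_pos hm, Finset.sum_singleton]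
        rw [hg]
        dsimp only
        unfold ddcrpWeight
        rw [if_pos rfl]
      · rw [if_neg hm, if_neg hm]
        have hgval : ∀ j ∈ (Cblk i).filter (· < i), g i j = a / D i := by
          intro j hj
          rw [Finset.mem_filter] at hj
          have hji : j ≠ i := ne_of_lt hj.2
          have hRij : R i j := (hmemBf i j).1 (hCsubBf i hj.1)
          rw [hg]
          dsimp only
          unfold ddcrpWeight
          rw [if_neg hji, hfval i j hji, if_pos ⟨hj.2, hRij⟩]
        rw [Finset.sum_congr rfl hgval, Finset.sum_const, nsmul_eq_mul]
        unfold rnk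
        ring
    -- rewrite prob as a sum over good assignments
    have hterm : ∀ c : Fin N → Fin N,
        Set.indicator {c | tablePartition c = πhat} (ddcrpProb d f α) c
          = if c ∈ Fintype.piFinset S then ddcrpProb d f α c else 0 := by
      intro c
      by_cases hzero : ddcrpProb d f α c = 0
      · rw [Set.indicator_apply, hzero]
        split_ifs <;> rfl
      · have hiff : tablePartition c = πhat ↔ ∀ i, c i ∈ S i :=
          ⟨htp_good c (hadm c hzero), hgood_tp c⟩
        by_cases hmemc : ∀ i, c i ∈ S i
        · rw [Set.indicator_of_mem
              (show c ∈ {c | tablePartition c = πhat} from hiff.2 hmemc),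
            if_pos (Fintype.mem_piFinset.2 hmemc)]
        · rw [Set.indicator_of_notMem
              (show c ∉ {c | tablePartition c = πhat} from fun hc => hmemc (hiff.1 hc)),
            if_neg (fun hc => hmemc (Fintype.mem_piFinset.1 hc))]
    have hprob2 : prob = ∏ i : Fin N, (num i / D i) := by
      rw [hprob, Finset.sum_congr rfl (fun c _ => hterm c), Finset.sum_ite_mem,
        Finset.univ_inter]
      rw [Finset.sum_congr rfl (fun c _ => hprod c), ← Finset.prod_univ_sum]
      exact Finset.prod_congr rfl (fun i _ => hsum i)
    -- group the product over the ddCRP blocks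
    have hcover : (Finset.univ : Finset (Fin N)) = blocks.biUnion id := by
      ext i
      simp only [Finset.mem_biUnion, id, Finset.mem_univ, true_iff]
      exact ⟨Bf i, hBfblocks i, hBfself i⟩
    have hpair : (blocks : Set (Finset (Fin N))).PairwiseDisjoint id := by
      intro B hB B' hB' hne
      simp only [id, Function.onFun]
      rw [Finset.disjoint_left]
      intro x hxB hxB'
      exact hne ((hblk_eq x B hB hxB).trans (hblk_eq x B' hB' hxB').symm)
    have hgroup : ∏ i : Fin N, (num i / D i) = ∏ B ∈ blocks, ∏ i ∈ B, (num i / D i) := by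
      conv_lhs => rw [hcover]
      rw [Finset.prod_biUnion hpair]
      simp only [id_eq]
    -- per-block value
    have hblockval : ∀ B ∈ blocks, ∏ i ∈ B, (num i / D i) =
        ((α / a) ^ (π.filter (· ⊆ B)).card *
            ∏ C ∈ π.filter (· ⊆ B), ((C.card - 1).factorial : ℝ)) /
          ∏ t ∈ Finset.range B.card, (α / a + (t : ℝ)) := by
      intro B hB
      have hBfi : ∀ i ∈ B, Bf i = B := fun i hi => (hblk_eq i B hB hi).symm
      have hDi : ∀ i ∈ B, D i = α + a * rnk B i := by
        intro i hi
        rw [hD i, hBfi i hi]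
      set πB := π.filter (· ⊆ B) with hπB
      have hπBdisj : (πB : Set (Finset (Fin N))).PairwiseDisjoint id := by
        intro C hC C' hC' hne
        simp only [id, Function.onFun]
        rw [Finset.disjoint_left]
        intro x hxC hxC'
        rw [Finset.mem_coe, hπB, Finset.mem_filter] at hC hC'
        exact hne ((hCuniq x C hC.1 hxC).trans (hCuniq x C' hC'.1 hxC').symm)
      have hBcover : B = πB.biUnion id := by
        ext i
        simp only [Finset.mem_biUnion, id, hπB, Finset.mem_filter]
        constructor
        · intro hi
          refine ⟨Cblk i, ⟨hCmem i, ?_⟩, hCself i⟩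
          intro x hx
          have : x ∈ Bf i := hCsubBf i hx
          rwa [hBfi i hi] at this
        · rintro ⟨C, ⟨-, hsub⟩, hiC⟩
          exact hsub hiC
      have hcardsum : B.card = ∑ C ∈ πB, C.card := by
        conv_lhs => rw [hBcover]
        exact Finset.card_biUnion (fun C hC C' hC' hne => hπBdisj hC hC' hne)
      have hkle : πB.card ≤ B.card := by
        calc πB.card = ∑ C ∈ πB, 1 := by simp
          _ ≤ ∑ C ∈ πB, C.card := by
              apply Finset.sum_le_sum
              intro C hC
              rw [hπB, Finset.mem_filter] at hC
              exact Nat.one_le_iff_ne_zero.2 (Finset.card_ne_zero_of_mem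
                ((hπne C hC.1).choose_spec))
          _ = B.card := hcardsum.symm
      -- numerator product
      have hnumC : ∀ C ∈ πB, ∏ i ∈ C, num i
          = α * a ^ (C.card - 1) * ((C.card - 1).factorial : ℝ) := by
        intro C hC
        rw [hπB, Finset.mem_filter] at hC
        have hCne : C.Nonempty := hπne C hC.1
        have hCC : ∀ i ∈ C, Cblk i = C := fun i hi => (hCuniq i C hC.1 hi).symm
        have : ∀ i ∈ C, num i = (fun t : ℕ => if t = 0 then α else a * (t : ℝ)) (rnk C i) := by
          intro i hi
          rw [hnum]
          dsimp only
          rw [hCC i hi]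
          by_cases hm : ∀ j ∈ C, i ≤ j
          · rw [if_pos hm, if_pos ((rnk_eq_zero_iff C i).2 hm)]
          · rw [if_neg hm, if_neg (fun h0 => hm ((rnk_eq_zero_iff C i).1 h0))]
        rw [Finset.prod_congr rfl this, prod_rnk C (fun t : ℕ => if t = 0 then α else a * (t : ℝ)),
          prod_crp_num α a C.card (Nat.one_le_iff_ne_zero.2 (Finset.card_ne_zero_of_mem
            hCne.choose_spec))]
      have hnumprod : ∏ i ∈ B, num i
          = α ^ πB.card * a ^ (B.card - πB.card) *
              ∏ C ∈ πB, ((C.card - 1).factorial : ℝ) := by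
        conv_lhs => rw [hBcover]
        rw [Finset.prod_biUnion hπBdisj]
        simp only [id_eq]
        rw [Finset.prod_congr rfl hnumC]
        rw [Finset.prod_mul_distrib, Finset.prod_mul_distrib, Finset.prod_const]
        congr 1
        congr 1
        rw [Finset.prod_pow_eq_pow_sum]
        congr 1
        have h1 : ∀ C ∈ πB, 1 ≤ C.card := by
          intro C hC
          rw [hπB, Finset.mem_filter] at hC
          exact Nat.one_le_iff_ne_zero.2 (Finset.card_ne_zero_of_mem
            (hπne C hC.1).choose_spec)
        have h2 : ∑ C ∈ πB, (C.card - 1) + ∑ C ∈ πB, 1 = ∑ C ∈ πB, C.card := by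
          rw [← Finset.sum_add_distrib]
          exact Finset.sum_congr rfl (fun C hC => Nat.sub_add_cancel (h1 C hC))
        have h3 : ∑ C ∈ πB, 1 = πB.card := by simp
        have : ∑ C ∈ πB, (C.card - 1) = B.card - πB.card := by omega
        rw [this]
      -- final algebra
      have hDprod : ∏ i ∈ B, D i = ∏ t ∈ Finset.range B.card, (α + a * (t : ℝ)) := by
        rw [Finset.prod_congr rfl hDi]
        exact prod_rnk B (fun t => α + a * (t : ℝ))
      have hGpos : (0:ℝ) < ∏ t ∈ Finset.range B.card, (α / a + (t : ℝ)) := by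
        apply Finset.prod_pos
        intro t _
        positivity
      have hGne : (∏ t ∈ Finset.range B.card, (α / a + (t : ℝ))) ≠ 0 := ne_of_gt hGpos
      have hsplit : ∏ t ∈ Finset.range B.card, (α + a * (t : ℝ))
          = a ^ B.card * ∏ t ∈ Finset.range B.card, (α / a + (t : ℝ)) := by
        have heach : ∀ t ∈ Finset.range B.card, (α + a * (t : ℝ)) = a * (α / a + (t : ℝ)) := by
          intro t _
          field_simp
        rw [Finset.prod_congr rfl heach, Finset.prod_mul_distrib, Finset.prod_const,
          Finset.card_range]
      have hane : a ≠ 0 := ne_of_gt ha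
      have hpowsplit : a ^ B.card = a ^ (B.card - πB.card) * a ^ πB.card := by
        rw [← pow_add]
        congr 1
        omega
      rw [Finset.prod_div_distrib, hnumprod, hDprod, hsplit, hpowsplit, div_pow]
      have hak : (a : ℝ) ^ πB.card ≠ 0 := pow_ne_zero _ hane
      have hamk : (a : ℝ) ^ (B.card - πB.card) ≠ 0 := pow_ne_zero _ hane
      field_simp
    rw [hprob2, hgroup]
    exact Finset.prod_congr rfl hblockval

end
end

section
/- Fix N ≥ 2 customers with sequential distances d(i,j) ∈ [0,∞] satisfying the relaxed triangle inequality for d̄(i,j) = min(d(i,j), d(j,i)). Let A be one of ∅, {0}, or [0,∞), let a > 0, let the decay function be f(x) = a·1[x ∈ A], and let α > 0. Then the ddCRP with decay f and parameter α is marginally invariant for these distances: for every customer m ∈ {1,…,N}, the distribution on partitions of {1,…,N}\{m} obtained by sampling c from the N-customer ddCRP, forming z(c), and deleting m from its block (discarding the block if it becomes empty) equals the distribution of the induced table partition under the ddCRP on the N−1 customers {1,…,N}\{m} with the restricted distances, decay f, and parameter α. -/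
open scoped BigOperators ENNReal Classical

set_option maxHeartbeats 1600000
open Finset

noncomputable section

/-- Delete customer `m` from a partition of `Fin N`: each block loses `m`, and a
block that becomes empty is discarded. -/
def deleteCustomer {N : ℕ} (m : Fin N) (π : Set (Set (Fin N))) : Set (Set (Fin N)) :=
  {B | B.Nonempty ∧ ∃ C ∈ π, B = C \ {m}}

/-- Marginal invariance of the ddCRP with distances `d`, decay `f` and parameter `α`:
for every customer `m`, the distribution of the partition obtained by sampling `c`
from the `N`-customer ddCRP, forming `z(c)` and deleting `m`, equals the distribution
of the induced table partition under the ddCRP on the remaining `N - 1` customers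
with the restricted distances.  The latter system is encoded by assignment vectors
`c` with `c m = m` and `c i ≠ m` for `i ≠ m`, weighted by the ddCRP probability on
the customer set `Finset.univ.erase m`; its induced partition is
`tablePartition c \ {{m}}`. -/
def MarginallyInvariant {N : ℕ} (d : Fin N → Fin N → ℝ≥0∞) (f : ℝ≥0∞ → ℝ)
    (α : ℝ) : Prop :=
  ∀ m : Fin N, ∀ π : Set (Set (Fin N)),
    (∑ c : Fin N → Fin N,
        Set.indicator {c | deleteCustomer m (tablePartition c) = π}
          (ddcrpProb d f α) c)
      = ∑ c : Fin N → Fin N,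
          Set.indicator
            {c | c m = m ∧ (∀ i : Fin N, i ≠ m → c i ≠ m) ∧
              tablePartition c \ {({m} : Set (Fin N))} = π}
            (ddcrpProbOn (Finset.univ.erase m) d f α) c

namespace DDCRP

variable {N : ℕ}

lemma finStrongInd {P : Fin N → Prop} (H : ∀ i : Fin N, (∀ j : Fin N, j < i → P j) → P i) :
    ∀ i, P i := by
  intro i
  induction' hi : i.1 using Nat.strong_induction_on with n ih generalizing i
  subst hi
  exact H i fun j hj => ih j.1 hj j rfl

lemma st_refl (c : Fin N → Fin N) (i : Fin N) : sameTable c i i := Relation.EqvGen.refl i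
lemma st_symm {c : Fin N → Fin N} {i j : Fin N} (h : sameTable c i j) : sameTable c j i :=
  Relation.EqvGen.symm _ _ h
lemma st_trans {c : Fin N → Fin N} {i j k : Fin N} (h : sameTable c i j)
    (h' : sameTable c j k) : sameTable c i k := Relation.EqvGen.trans _ _ _ h h'
lemma st_base (c : Fin N → Fin N) (i : Fin N) : sameTable c i (c i) :=
  Relation.EqvGen.rel i (c i) rfl
lemma st_equiv (c : Fin N → Fin N) : Equivalence (sameTable c) :=
  Relation.EqvGen.is_equivalence _

/-- pull a `sameTable`-bounded `EqvGen` back into `sameTable`. -/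
lemma st_of_mono {c c' : Fin N → Fin N} (H : ∀ a, sameTable c' a (c a)) {x y : Fin N}
    (h : sameTable c x y) : sameTable c' x y := by
  have h2 := Relation.EqvGen.mono (r := fun a b => b = c a) (p := sameTable c')
    (fun a b hb => hb ▸ H a) _ _ h
  rwa [Equivalence.eqvGen_eq (st_equiv c')] at h2

def Valid (c : Fin N → Fin N) : Prop := ∀ i, c i ≤ i

def root (c : Fin N → Fin N) (i : Fin N) : Fin N :=
  if h : c i < i then root c (c i) else i
termination_by i.1
decreasing_by exact h

lemma root_spec_lt {c : Fin N → Fin N} {i : Fin N} (h : c i < i) :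
    root c i = root c (c i) := by rw [root, dif_pos h]

lemma root_spec_ge {c : Fin N → Fin N} {i : Fin N} (h : ¬ c i < i) :
    root c i = i := by rw [root, dif_neg h]

lemma root_le (c : Fin N → Fin N) : ∀ i, root c i ≤ i := by
  refine finStrongInd fun i IH => ?_
  by_cases h : c i < i
  · rw [root_spec_lt h]; exact le_of_lt (lt_of_le_of_lt (IH _ h) h)
  · rw [root_spec_ge h]

lemma st_root (c : Fin N → Fin N) : ∀ i, sameTable c i (root c i) := by
  refine finStrongInd fun i IH => ?_
  by_cases h : c i < i
  · rw [root_spec_lt h]; exact st_trans (st_base c i) (IH _ h)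
  · rw [root_spec_ge h]; exact st_refl c i

lemma root_fix {c : Fin N → Fin N} (hv : Valid c) : ∀ i, c (root c i) = root c i := by
  refine finStrongInd fun i IH => ?_
  by_cases h : c i < i
  · rw [root_spec_lt h]; exact IH _ h
  · rw [root_spec_ge h]; exact le_antisymm (hv i) (not_lt.mp h)

lemma st_root_eq {c : Fin N → Fin N} (hv : Valid c) {i j : Fin N}
    (h : sameTable c i j) : root c i = root c j := by
  induction h with
  | rel a b hab =>
    subst hab
    by_cases h : c a < a
    · exact root_spec_lt h
    · have : c a = a := le_antisymm (hv a) (not_lt.mp h)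
      rw [this]
  | refl => rfl
  | symm _ _ _ ih => exact ih.symm
  | trans _ _ _ _ _ ih1 ih2 => exact ih1.trans ih2

lemma st_iff_root {c : Fin N → Fin N} (hv : Valid c) {i j : Fin N} :
    sameTable c i j ↔ root c i = root c j :=
  ⟨st_root_eq hv, fun h => st_trans (st_root c i) (h ▸ (st_root c j).symm)⟩

lemma root_le_of_st {c : Fin N → Fin N} (hv : Valid c) {i j : Fin N}
    (h : sameTable c i j) : root c i ≤ j := st_root_eq hv h ▸ root_le c j

lemma root_eq_self_iff {c : Fin N → Fin N} (hv : Valid c) {i : Fin N} :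
    c i = i ↔ root c i = i := by
  constructor
  · intro h; exact root_spec_ge (by rw [h]; exact lt_irrefl i)
  · intro h
    by_contra hc
    have hlt : c i < i := lt_of_le_of_ne (hv i) hc
    have h3 : root c (c i) = i := (root_spec_lt hlt).symm.trans h
    have h2 : i ≤ c i := le_of_eq_of_le h3.symm (root_le c (c i))
    exact absurd h2 (not_le.mpr hlt)

lemma root_congr {c c0 : Fin N → Fin N} (hv : Valid c) (hv0 : Valid c0)
    (H : ∀ x y, sameTable c x y ↔ sameTable c0 x y) (i : Fin N) :
    root c i = root c0 i := by
  refine le_antisymm (root_le_of_st hv ((H _ _).mpr (st_root c0 i)))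
    (root_le_of_st hv0 ((H _ _).mp (st_root c i)))

/-- Lemma B -/
lemma fits_iff {c c0 : Fin N → Fin N} (hv : Valid c) (hv0 : Valid c0) :
    (∀ x y, sameTable c x y ↔ sameTable c0 x y) ↔
      (∀ i, sameTable c0 i (c i) ∧ (c i = i ↔ root c0 i = i)) := by
  constructor
  · intro H i
    refine ⟨(H _ _).mp (st_base c i), ?_⟩
    rw [root_eq_self_iff hv, root_congr hv hv0 H]
  · intro H
    have key : ∀ i, sameTable c i (root c0 i) := by
      refine finStrongInd fun i IH => ?_
      by_cases h : root c0 i = i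
      · rw [h]; exact st_refl c i
      · have hci : c i ≠ i := fun hc => h ((H i).2.mp hc)
        have hlt : c i < i := lt_of_le_of_ne (hv i) hci
        have h1 : root c0 (c i) = root c0 i := st_root_eq hv0 (st_symm (H i).1)
        exact st_trans (st_base c i) (h1 ▸ IH _ hlt)
    intro x y
    constructor
    · exact fun h => st_of_mono (fun a => (H a).1) h
    · intro h
      have := st_root_eq hv0 h
      exact st_trans (key x) (this ▸ (key y).symm)

/-! ### Form and psi -/

variable (m : Fin N)

def Form (c : Fin N → Fin N) : Prop := c m = m ∧ ∀ i, i ≠ m → c i ≠ m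

lemma form_st_iff {c : Fin N → Fin N} (hF : Form m c) {i j : Fin N}
    (h : sameTable c i j) : (i = m ↔ j = m) := by
  induction h with
  | rel a b hab =>
    subst hab
    constructor
    · rintro rfl; exact hF.1
    · intro h; by_contra ha; exact hF.2 a ha h
  | refl => exact Iff.rfl
  | symm _ _ _ ih => exact ih.symm
  | trans _ _ _ _ _ ih1 ih2 => exact ih1.trans ih2

lemma form_st_m {c : Fin N → Fin N} (hF : Form m c) {i : Fin N}
    (h : sameTable c i m) : i = m := (form_st_iff m hF h).mpr rfl

def psiSet (c : Fin N → Fin N) (i : Fin N) : Finset (Fin N) :=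
  univ.filter fun j => j < i ∧ j ≠ m ∧ sameTable c i j

def psi (c : Fin N → Fin N) : Fin N → Fin N := fun i =>
  if i = m then m
  else if h : (psiSet m c i).Nonempty then (psiSet m c i).max' h else i

lemma psi_m (c : Fin N → Fin N) : psi m c m = m := if_pos rfl

lemma psi_le (c : Fin N → Fin N) (i : Fin N) : psi m c i ≤ i := by
  unfold psi
  split
  · next h => exact h.ge
  · split
    · next h =>
      have := (psiSet m c i).max'_mem h
      simp only [psiSet, mem_filter] at this
      exact this.2.1.le
    · exact le_refl i

lemma psi_valid (c : Fin N → Fin N) : Valid (psi m c) := psi_le m c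

lemma psi_ne {c : Fin N → Fin N} {i : Fin N} (hi : i ≠ m) : psi m c i ≠ m := by
  unfold psi
  rw [if_neg hi]
  split
  · next h =>
    have := (psiSet m c i).max'_mem h
    simp only [psiSet, mem_filter] at this
    exact this.2.2.1
  · exact hi

lemma psi_form (c : Fin N → Fin N) : Form m (psi m c) :=
  ⟨psi_m m c, fun _ hi => psi_ne m hi⟩

lemma psi_st_self (c : Fin N → Fin N) (a : Fin N) : sameTable c a (psi m c a) := by
  unfold psi
  split
  · next h => subst h; exact st_refl c _
  · split
    · next h =>
      have := (psiSet m c a).max'_mem h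
      simp only [psiSet, mem_filter] at this
      exact this.2.2.2
    · exact st_refl c a

lemma psi_st_mp {c : Fin N → Fin N} {x y : Fin N} (h : sameTable (psi m c) x y) :
    sameTable c x y := st_of_mono (psi_st_self m c) h

def mrepSet (c : Fin N → Fin N) (i : Fin N) : Finset (Fin N) :=
  univ.filter fun j => j ≠ m ∧ sameTable c i j

lemma mrepSet_ne {c : Fin N → Fin N} {i : Fin N} (hi : i ≠ m) : (mrepSet m c i).Nonempty :=
  ⟨i, by simp [mrepSet, hi, st_refl]⟩

def mrep (c : Fin N → Fin N) (i : Fin N) (hi : i ≠ m) : Fin N :=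
  (mrepSet m c i).min' (mrepSet_ne m hi)

lemma mrep_le {c : Fin N → Fin N} {i : Fin N} (hi : i ≠ m) : mrep m c i hi ≤ i :=
  Finset.min'_le _ _ (by simp [mrepSet, hi, st_refl])

lemma mrep_spec {c : Fin N → Fin N} {i : Fin N} (hi : i ≠ m) :
    mrep m c i hi ≠ m ∧ sameTable c i (mrep m c i hi) := by
  have := Finset.min'_mem (mrepSet m c i) (mrepSet_ne m hi)
  simpa [mrepSet, mrep] using this

lemma mrep_congr {c : Fin N → Fin N} {i j : Fin N} (hi : i ≠ m) (hj : j ≠ m)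
    (h : sameTable c i j) : mrep m c i hi = mrep m c j hj := by
  unfold mrep
  congr 1
  unfold mrepSet
  apply Finset.filter_congr
  intro k _
  constructor
  · rintro ⟨h1, h2⟩; exact ⟨h1, st_trans (st_symm h) h2⟩
  · rintro ⟨h1, h2⟩; exact ⟨h1, st_trans h h2⟩

lemma psi_st_mrep (c : Fin N → Fin N) :
    ∀ i, ∀ hi : i ≠ m, sameTable (psi m c) i (mrep m c i hi) := by
  refine finStrongInd fun i IH hi => ?_
  by_cases hmin : mrep m c i hi = i
  · rw [hmin]; exact st_refl _ i
  · have hlt : mrep m c i hi < i := lt_of_le_of_ne (mrep_le m hi) hmin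
    have hne : (psiSet m c i).Nonempty :=
      ⟨mrep m c i hi, by simp [psiSet, hlt, (mrep_spec m hi).1, (mrep_spec m hi).2]⟩
    set js := (psiSet m c i).max' hne with hjs
    have hmem := (psiSet m c i).max'_mem hne
    simp only [psiSet, mem_filter] at hmem
    obtain ⟨-, hjlt, hjm, hjst⟩ := hmem
    have hpsii : psi m c i = js := by unfold psi; rw [if_neg hi, dif_pos hne]
    have edge : sameTable (psi m c) i js := hpsii ▸ st_base (psi m c) i
    have h2 : sameTable (psi m c) js (mrep m c js hjm) := IH js hjlt hjm
    have h3 : mrep m c js hjm = mrep m c i hi := mrep_congr m hjm hi (st_symm hjst)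
    exact st_trans edge (h3 ▸ h2)

lemma psi_st {c : Fin N → Fin N} {x y : Fin N} (hx : x ≠ m) (hy : y ≠ m) :
    sameTable (psi m c) x y ↔ sameTable c x y := by
  constructor
  · exact psi_st_mp m
  · intro h
    have h1 := psi_st_mrep m c x hx
    have h2 := psi_st_mrep m c y hy
    rw [mrep_congr m hx hy h] at h1
    exact st_trans h1 (st_symm h2)

lemma psi_congr {c c' : Fin N → Fin N}
    (H : ∀ x y, x ≠ m → y ≠ m → (sameTable c x y ↔ sameTable c' x y)) :
    psi m c = psi m c' := by
  funext i
  unfold psi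
  by_cases hi : i = m
  · rw [if_pos hi, if_pos hi]
  · rw [if_neg hi, if_neg hi]
    have hset : psiSet m c i = psiSet m c' i := by
      unfold psiSet
      apply Finset.filter_congr
      intro k _
      constructor
      · rintro ⟨h1, h2, h3⟩; exact ⟨h1, h2, (H i k hi h2).mp h3⟩
      · rintro ⟨h1, h2, h3⟩; exact ⟨h1, h2, (H i k hi h2).mpr h3⟩
    rw [hset]

lemma psi_idem (c : Fin N → Fin N) : psi m (psi m c) = psi m c :=
  psi_congr m fun x y hx hy => psi_st m hx hy

lemma rel_eq_of_del {c c0 : Fin N → Fin N} (hF : Form m c) (hF0 : Form m c0)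
    (H : ∀ x y, x ≠ m → y ≠ m → (sameTable c x y ↔ sameTable c0 x y)) :
    ∀ x y, sameTable c x y ↔ sameTable c0 x y := by
  intro x y
  by_cases hx : x = m
  · by_cases hy : y = m
    · rw [hx, hy]; exact iff_of_true (st_refl c m) (st_refl c0 m)
    · rw [hx]
      constructor
      · intro h; exact absurd ((form_st_iff m hF h).mp rfl) hy
      · intro h; exact absurd ((form_st_iff m hF0 h).mp rfl) hy
  · by_cases hy : y = m
    · rw [hy]
      constructor
      · intro h; exact absurd (form_st_m m hF h) hx
      · intro h; exact absurd (form_st_m m hF0 h) hx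
    · exact H x y hx hy


/-! ### Partition lemmas -/

lemma delete_subset {m : Fin N} {c c2 : Fin N → Fin N}
    (H : ∀ x y, x ≠ m → y ≠ m → (sameTable c x y ↔ sameTable c2 x y)) :
    deleteCustomer m (tablePartition c) ⊆ deleteCustomer m (tablePartition c2) := by
  rintro B ⟨⟨x, hxB⟩, C, ⟨i, rfl⟩, rfl⟩
  have hxm : x ≠ m := hxB.2
  have hix : sameTable c i x := hxB.1
  refine ⟨⟨x, hxB⟩, {j | sameTable c2 x j}, ⟨x, rfl⟩, ?_⟩
  ext j
  simp only [Set.mem_diff, Set.mem_setOf_eq, Set.mem_singleton_iff]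
  constructor
  · rintro ⟨hj, hjm⟩; exact ⟨(H x j hxm hjm).mp (st_trans (st_symm hix) hj), hjm⟩
  · rintro ⟨hj, hjm⟩; exact ⟨st_trans hix ((H x j hxm hjm).mpr hj), hjm⟩

lemma delete_eq {m : Fin N} {c c2 : Fin N → Fin N}
    (H : ∀ x y, x ≠ m → y ≠ m → (sameTable c x y ↔ sameTable c2 x y)) :
    deleteCustomer m (tablePartition c) = deleteCustomer m (tablePartition c2) :=
  Set.Subset.antisymm (delete_subset H)
    (delete_subset fun x y hx hy => (H x y hx hy).symm)

lemma form_class_m {m : Fin N} {c : Fin N → Fin N} (hF : Form m c) :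
    {j | sameTable c m j} = ({m} : Set (Fin N)) := by
  ext j
  simp only [Set.mem_setOf_eq, Set.mem_singleton_iff]
  exact ⟨fun h => ((form_st_iff m hF h).mp rfl).symm ▸ rfl,
    fun h => h ▸ st_refl c m⟩

lemma form_class_m' {m : Fin N} {c : Fin N → Fin N} (hF : Form m c) {i : Fin N}
    (hi : i ≠ m) : m ∉ {j | sameTable c i j} := by
  intro h
  exact hi (form_st_m m hF h)

lemma form_delete {m : Fin N} {c : Fin N → Fin N} (hF : Form m c) :
    tablePartition c \ {({m} : Set (Fin N))} = deleteCustomer m (tablePartition c) := by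
  ext B
  constructor
  · rintro ⟨⟨i, rfl⟩, hBm⟩
    simp only [Set.mem_singleton_iff] at hBm
    have him : i ≠ m := by
      intro h
      exact hBm (by rw [h]; exact form_class_m hF)
    have hmC := form_class_m' hF him
    exact ⟨⟨i, st_refl c i⟩, {j | sameTable c i j}, ⟨i, rfl⟩,
      (Set.diff_singleton_eq_self hmC).symm⟩
  · rintro ⟨⟨x, hx⟩, C, ⟨i, rfl⟩, rfl⟩
    have hxm : x ≠ m := hx.2
    have hix : sameTable c i x := hx.1
    have him : i ≠ m := by
      intro h
      exact hxm ((form_st_iff m hF hix).mp h)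
    have hmC := form_class_m' hF him
    rw [Set.diff_singleton_eq_self hmC]
    refine ⟨⟨i, rfl⟩, ?_⟩
    simp only [Set.mem_singleton_iff]
    intro hBm
    have : i ∈ ({m} : Set (Fin N)) := hBm ▸ st_refl c i
    exact him this

/-! ### The decay relation -/

variable (d : Fin N → Fin N → ℝ≥0∞) (A : Set ℝ≥0∞)

def Erel (i j : Fin N) : Prop := min (d i j) (d j i) ∈ A

variable {d A}

section Edata

variable (hA : A = ∅ ∨ A = {0} ∨ A = {x : ℝ≥0∞ | x ≠ ⊤})
  (hseq : ∀ i j : Fin N, i < j → d i j = ⊤)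
  (htri : ∀ i j k : Fin N,
      (min (d i j) (d j i) = 0 → min (d j k) (d k j) = 0 → min (d i k) (d k i) = 0) ∧
      (min (d i j) (d j i) ≠ ⊤ → min (d j k) (d k j) ≠ ⊤ → min (d i k) (d k i) ≠ ⊤))

lemma Esymm {i j : Fin N} (h : Erel d A i j) : Erel d A j i := by
  unfold Erel at *; rwa [min_comm]

include hA htri in
lemma Etrans {i j k : Fin N} (h1 : Erel d A i j) (h2 : Erel d A j k) : Erel d A i k := by
  unfold Erel at *
  rcases hA with h | h | h
  · rw [h] at h1; exact absurd h1 (Set.notMem_empty _)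
  · subst h
    simp only [Set.mem_singleton_iff] at *
    exact (htri i j k).1 h1 h2
  · subst h
    simp only [Set.mem_setOf_eq] at *
    exact (htri i j k).2 h1 h2

include hA in
lemma top_not_mem : (⊤ : ℝ≥0∞) ∉ A := by
  rcases hA with h | h | h <;> subst h <;> simp

variable (a : ℝ) (f : ℝ≥0∞ → ℝ) (hf : f = A.indicator fun _ => a)

include hf hA hseq in
lemma fval {i j : Fin N} (hij : i ≠ j) :
    f (d i j) = if Erel d A i j ∧ j < i then a else 0 := by
  subst hf
  rcases lt_or_gt_of_ne hij with h | h
  · have hd : d i j = ⊤ := hseq i j h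
    rw [hd, Set.indicator_of_notMem (top_not_mem hA)]
    rw [if_neg]
    rintro ⟨-, hji⟩
    exact absurd hji (not_lt.mpr h.le)
  · have hd : d j i = ⊤ := hseq j i h
    have hmin : min (d i j) (d j i) = d i j := by rw [hd]; exact min_eq_left le_top
    unfold Erel
    rw [hmin, Set.indicator_apply]
    by_cases hm : d i j ∈ A
    · rw [if_pos hm, if_pos ⟨hm, h⟩]
    · rw [if_neg hm, if_neg (fun hh => hm hh.1)]

variable {a f} (ha : 0 < a)

include hf ha in
lemma fnonneg (x : ℝ≥0∞) : 0 ≤ f x := by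
  subst hf
  exact Set.indicator_nonneg (fun _ _ => ha.le) x

end Edata

/-! ### Fiber machinery -/

def dcl (m : Fin N) (c0 : Fin N → Fin N) (x : Fin N) : Finset (Fin N) :=
  univ.filter fun j => j ≠ m ∧ sameTable c0 x j

def Bmap (m : Fin N) (c : Fin N → Fin N) : Finset (Fin N) :=
  univ.filter fun i => i ≠ m ∧ sameTable c i m

def Vset' (c0 : Fin N → Fin N) (i : Fin N) : Finset (Fin N) :=
  univ.filter fun j => sameTable c0 i j ∧ j ≤ i ∧ (j = i ↔ root c0 i = i)

def TB (m : Fin N) (B : Finset (Fin N)) : Finset (Fin N) := insert m B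

lemma TB_ne (m : Fin N) (B : Finset (Fin N)) : (TB m B).Nonempty :=
  ⟨m, mem_insert_self m B⟩

def VsetB (m : Fin N) (c0 : Fin N → Fin N) (B : Finset (Fin N)) (i : Fin N) :
    Finset (Fin N) :=
  if i ∈ TB m B then
    (if i = (TB m B).min' (TB_ne m B) then {i} else (TB m B).filter (· < i))
  else Vset' c0 i

def GoodB (m : Fin N) (c0 : Fin N → Fin N) (B : Finset (Fin N)) : Prop :=
  B = ∅ ∨ ∃ x, x ≠ m ∧ B = dcl m c0 x

lemma mem_Vset' {c0 : Fin N → Fin N} {i j : Fin N} :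
    j ∈ Vset' c0 i ↔ sameTable c0 i j ∧ j ≤ i ∧ (j = i ↔ root c0 i = i) := by
  simp [Vset']

/-- Characterization of the RHS fiber. -/
lemma charR {m : Fin N} {c0 c' : Fin N → Fin N} (hv0 : Valid c0) (hF0 : Form m c0)
    (hcan : psi m c0 = c0) :
    (Valid c' ∧ Form m c' ∧ psi m c' = c0) ↔ ∀ i, c' i ∈ Vset' c0 i := by
  constructor
  · rintro ⟨hv, hF, hpsi⟩
    have hrel : ∀ x y, sameTable c' x y ↔ sameTable c0 x y := by
      apply rel_eq_of_del m hF hF0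
      intro x y hx hy
      have h := psi_st m (c := c') hx hy
      rw [hpsi] at h
      exact h.symm
    have hfits := (fits_iff hv hv0).mp hrel
    intro i
    rw [mem_Vset']
    exact ⟨(hfits i).1, hv i, (hfits i).2⟩
  · intro hmem
    have hmem' : ∀ i, sameTable c0 i (c' i) ∧ c' i ≤ i ∧ (c' i = i ↔ root c0 i = i) :=
      fun i => mem_Vset'.mp (hmem i)
    have hv : Valid c' := fun i => (hmem' i).2.1
    have hrel : ∀ x y, sameTable c' x y ↔ sameTable c0 x y :=
      (fits_iff hv hv0).mpr fun i => ⟨(hmem' i).1, (hmem' i).2.2⟩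
    have hcm : c' m = m := (hmem' m).2.2.mpr ((root_eq_self_iff hv0).mp hF0.1)
    have hFne : ∀ i, i ≠ m → c' i ≠ m := fun i hi hci =>
      hi (form_st_m m hF0 (hci ▸ (hmem' i).1))
    refine ⟨hv, ⟨hcm, hFne⟩, ?_⟩
    rw [psi_congr m (fun x y hx hy => hrel x y), hcan]

/-- Characterization of LHS fibers, forward direction. -/
lemma charL_mp {m : Fin N} {c0 c : Fin N → Fin N} (hv0 : Valid c0) (hF0 : Form m c0)
    (hv : Valid c)
    (hrel : ∀ x y, x ≠ m → y ≠ m → (sameTable c x y ↔ sameTable c0 x y)) :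
    GoodB m c0 (Bmap m c) ∧ ∀ i, c i ∈ VsetB m c0 (Bmap m c) i := by
  set B := Bmap m c with hB
  have memT : ∀ i, i ∈ TB m B ↔ sameTable c i m := by
    intro i
    simp only [TB, mem_insert, hB, Bmap, mem_filter, mem_univ, true_and]
    constructor
    · rintro (h | ⟨-, h⟩)
      · rw [h]; exact st_refl c m
      · exact h
    · intro h
      by_cases hi : i = m
      · exact Or.inl hi
      · exact Or.inr ⟨hi, h⟩
  have hGood : GoodB m c0 B := by
    rcases eq_or_ne B ∅ with h | h
    · exact Or.inl h
    · obtain ⟨x, hx⟩ := nonempty_iff_ne_empty.mpr h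
      simp only [hB, Bmap, mem_filter, mem_univ, true_and] at hx
      refine Or.inr ⟨x, hx.1, ?_⟩
      ext j
      simp only [hB, Bmap, dcl, mem_filter, mem_univ, true_and]
      constructor
      · rintro ⟨hjm, hj⟩
        exact ⟨hjm, (hrel x j hx.1 hjm).mp (st_trans hx.2 (st_symm hj))⟩
      · rintro ⟨hjm, hj⟩
        exact ⟨hjm, st_trans ((hrel x j hx.1 hjm).mpr hj).symm hx.2⟩
  refine ⟨hGood, fun i => ?_⟩
  by_cases hiT : i ∈ TB m B
  · have hstim : sameTable c i m := (memT i).mp hiT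
    have hciT : c i ∈ TB m B := (memT (c i)).mpr (st_trans (st_symm (st_base c i)) hstim)
    have hroot : root c i = (TB m B).min' (TB_ne m B) := by
      apply le_antisymm
      · apply Finset.le_min'
        intro y hy
        exact root_le_of_st hv (st_trans hstim (st_symm ((memT y).mp hy)))
      · apply Finset.min'_le
        apply (memT _).mpr
        have := st_root c i
        exact st_trans (st_symm this) hstim
    unfold VsetB
    rw [if_pos hiT]
    by_cases hmin : i = (TB m B).min' (TB_ne m B)
    · rw [if_pos hmin, Finset.mem_singleton]
      exact (root_eq_self_iff hv).mpr (hroot.trans hmin.symm)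
    · rw [if_neg hmin]
      have hne : c i ≠ i := fun h => hmin (((root_eq_self_iff hv).mp h).symm.trans hroot)
      simp only [mem_filter]
      exact ⟨hciT, lt_of_le_of_ne (hv i) hne⟩
  · have hnst : ¬ sameTable c i m := fun h => hiT ((memT i).mpr h)
    have him : i ≠ m := fun h => hnst (by rw [h]; exact st_refl c m)
    have hcim : c i ≠ m := fun h => hnst (by rw [← h]; exact st_base c i)
    have hst0 : sameTable c0 i (c i) := (hrel i (c i) him hcim).mp (st_base c i)
    have hrooteq : root c i = root c0 i := by
      apply le_antisymm
      · have h0m : root c0 i ≠ m := fun h =>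
          him (form_st_m m hF0 (by rw [← h]; exact st_root c0 i))
        exact root_le_of_st hv ((hrel i _ him h0m).mpr (st_root c0 i))
      · have hrm : root c i ≠ m := fun h => hnst (by rw [← h]; exact st_root c i)
        exact root_le_of_st hv0 ((hrel i _ him hrm).mp (st_root c i))
    unfold VsetB
    rw [if_neg hiT, mem_Vset']
    refine ⟨hst0, hv i, ?_⟩
    rw [← hrooteq]
    exact root_eq_self_iff hv

/-- Characterization of LHS fibers, reverse direction. -/
lemma charL_mpr {m : Fin N} {c0 c : Fin N → Fin N} {B : Finset (Fin N)}
    (hv0 : Valid c0) (hF0 : Form m c0)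
    (hGood : GoodB m c0 B) (hmem : ∀ i, c i ∈ VsetB m c0 B i) :
    Valid c ∧ (∀ x y, x ≠ m → y ≠ m → (sameTable c x y ↔ sameTable c0 x y)) ∧
      Bmap m c = B := by
  have hBdef : ∀ j ∈ B, j ≠ m ∧ ∃ x, x ≠ m ∧ sameTable c0 x j ∧ B = dcl m c0 x := by
    intro j hj
    rcases hGood with h | ⟨x, hx, h⟩
    · rw [h] at hj; exact absurd hj (notMem_empty j)
    · rw [h] at hj
      simp only [dcl, mem_filter, mem_univ, true_and] at hj
      exact ⟨hj.1, x, hx, hj.2, h⟩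
  have hdisj : ∀ i, i ∉ TB m B → ∀ j, sameTable c0 i j → j ∉ TB m B := by
    intro i hiT j hst hjT
    have him : i ≠ m := fun h => hiT (by rw [h]; exact mem_insert_self m B)
    rcases mem_insert.mp hjT with h | hjB
    · exact him (form_st_m m hF0 (by rw [← h]; exact hst))
    · obtain ⟨hjm, x, hxm, hxj, hBx⟩ := hBdef j hjB
      apply hiT
      apply mem_insert_of_mem
      rw [hBx]
      simp only [dcl, mem_filter, mem_univ, true_and]
      exact ⟨him, st_trans hxj (st_symm hst)⟩
  have hmemT : ∀ i, i ∈ TB m B → c i ∈ TB m B ∧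
      (i = (TB m B).min' (TB_ne m B) → c i = i) ∧
      (i ≠ (TB m B).min' (TB_ne m B) → c i < i) := by
    intro i hiT
    have h := hmem i
    unfold VsetB at h
    rw [if_pos hiT] at h
    by_cases hmin : i = (TB m B).min' (TB_ne m B)
    · rw [if_pos hmin, Finset.mem_singleton] at h
      exact ⟨by rw [h]; exact hiT, fun _ => h, fun hh => absurd hmin hh⟩
    · rw [if_neg hmin] at h
      simp only [mem_filter] at h
      exact ⟨h.1, fun hh => absurd hh hmin, fun _ => h.2⟩
  have hmemF : ∀ i, i ∉ TB m B →
      sameTable c0 i (c i) ∧ c i ≤ i ∧ (c i = i ↔ root c0 i = i) := by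
    intro i hiT
    have h := hmem i
    unfold VsetB at h
    rw [if_neg hiT, mem_Vset'] at h
    exact h
  have hv : Valid c := by
    intro i
    by_cases hiT : i ∈ TB m B
    · by_cases hmin : i = (TB m B).min' (TB_ne m B)
      · exact ((hmemT i hiT).2.1 hmin).le
      · exact ((hmemT i hiT).2.2 hmin).le
    · exact (hmemF i hiT).2.1
  have C1 : ∀ i, i ∈ TB m B → sameTable c i ((TB m B).min' (TB_ne m B)) := by
    refine finStrongInd fun i IH hiT => ?_
    by_cases hmin : i = (TB m B).min' (TB_ne m B)
    · rw [← hmin]; exact st_refl c i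
    · have h1 := (hmemT i hiT).2.2 hmin
      exact st_trans (st_base c i) (IH (c i) h1 (hmemT i hiT).1)
  have C2 : ∀ i, i ∉ TB m B → sameTable c i (root c0 i) ∧ root c0 i ∉ TB m B := by
    refine finStrongInd fun i IH hiT => ?_
    have hm := hmemF i hiT
    have hrT : root c0 i ∉ TB m B := hdisj i hiT _ (st_root c0 i)
    by_cases h : root c0 i = i
    · exact ⟨by rw [h]; exact st_refl c i, hrT⟩
    · have hcne : c i ≠ i := fun hc => h (hm.2.2.mp hc)
      have hlt : c i < i := lt_of_le_of_ne hm.2.1 hcne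
      have hcT : c i ∉ TB m B := hdisj i hiT _ hm.1
      have IH2 := IH (c i) hlt hcT
      have heq : root c0 (c i) = root c0 i := (st_root_eq hv0 hm.1).symm
      rw [heq] at IH2
      exact ⟨st_trans (st_base c i) IH2.1, hrT⟩
  have Inv : ∀ x y, sameTable c x y →
      ((x ∈ TB m B ↔ y ∈ TB m B) ∧ (x ∉ TB m B → sameTable c0 x y)) := by
    intro x y h
    induction h with
    | rel p q hpq =>
      subst hpq
      by_cases hpT : p ∈ TB m B
      · exact ⟨iff_of_true hpT (hmemT p hpT).1, fun hh => absurd hpT hh⟩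
      · have hm := hmemF p hpT
        exact ⟨iff_of_false hpT (hdisj p hpT _ hm.1), fun _ => hm.1⟩
    | refl x => exact ⟨Iff.rfl, fun _ => st_refl c0 x⟩
    | symm x y _ ih =>
      exact ⟨ih.1.symm, fun hy => st_symm (ih.2 (fun hx => hy (ih.1.mp hx)))⟩
    | trans x y z _ _ ih1 ih2 =>
      exact ⟨ih1.1.trans ih2.1,
        fun hx => st_trans (ih1.2 hx) (ih2.2 (fun hy => hx (ih1.1.mpr hy)))⟩
  have hrel : ∀ x y, x ≠ m → y ≠ m → (sameTable c x y ↔ sameTable c0 x y) := by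
    intro x y hx hy
    constructor
    · intro h
      by_cases hxT : x ∈ TB m B
      · have hyT : y ∈ TB m B := (Inv x y h).1.mp hxT
        have hxB : x ∈ B := (mem_insert.mp hxT).resolve_left hx
        have hyB : y ∈ B := (mem_insert.mp hyT).resolve_left hy
        obtain ⟨-, x0, hx0, hx0x, hBx⟩ := hBdef x hxB
        have hy0 : y ∈ dcl m c0 x0 := hBx ▸ hyB
        simp only [dcl, mem_filter, mem_univ, true_and] at hy0
        exact st_trans (st_symm hx0x) hy0.2
      · exact (Inv x y h).2 hxT
    · intro h
      by_cases hxT : x ∈ TB m B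
      · have hxB : x ∈ B := (mem_insert.mp hxT).resolve_left hx
        obtain ⟨-, x0, hx0, hx0x, hBx⟩ := hBdef x hxB
        have hyB : y ∈ B := by
          rw [hBx]
          simp only [dcl, mem_filter, mem_univ, true_and]
          exact ⟨hy, st_trans hx0x h⟩
        exact st_trans (C1 x hxT) (st_symm (C1 y (mem_insert_of_mem hyB)))
      · have hyT : y ∉ TB m B := hdisj x hxT y h
        have h3 : root c0 x = root c0 y := st_root_eq hv0 h
        exact st_trans (C2 x hxT).1 (by rw [h3]; exact st_symm (C2 y hyT).1)
  have hBmap : Bmap m c = B := by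
    ext i
    simp only [Bmap, mem_filter, mem_univ, true_and]
    constructor
    · rintro ⟨him, hst⟩
      by_cases hiT : i ∈ TB m B
      · exact (mem_insert.mp hiT).resolve_left him
      · exact absurd ((Inv i m hst).1.mpr (mem_insert_self m B)) hiT
    · intro hiB
      have hiT : i ∈ TB m B := mem_insert_of_mem hiB
      exact ⟨(hBdef i hiB).1,
        st_trans (C1 i hiT) (st_symm (C1 m (mem_insert_self m B)))⟩
  exact ⟨hv, hrel, hBmap⟩

/-! ### Rank machinery -/

def rnk (T : Finset (Fin N)) (i : Fin N) : ℕ := (T.filter (· < i)).card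

lemma rnk_strict {T : Finset (Fin N)} {i j : Fin N} (hi : i ∈ T) (hij : i < j) :
    rnk T i < rnk T j := by
  have hsub : insert i (T.filter (· < i)) ⊆ T.filter (· < j) := by
    intro x hx
    rcases mem_insert.mp hx with h | hx
    · exact mem_filter.mpr ⟨h ▸ hi, h ▸ hij⟩
    · have := mem_filter.mp hx
      exact mem_filter.mpr ⟨this.1, this.2.trans hij⟩
  have h1 : rnk T i < (insert i (T.filter (· < i))).card := by
    rw [card_insert_of_notMem (by simp)]
    exact Nat.lt_succ_self _
  exact lt_of_lt_of_le h1 (card_le_card hsub)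

lemma rnk_injOn {T : Finset (Fin N)} {i j : Fin N} (hi : i ∈ T) (hj : j ∈ T)
    (h : rnk T i = rnk T j) : i = j := by
  rcases lt_trichotomy i j with hh | hh | hh
  · exact absurd h (rnk_strict hi hh).ne
  · exact hh
  · exact absurd h.symm (rnk_strict hj hh).ne

lemma rnk_lt_card {T : Finset (Fin N)} {i : Fin N} (hi : i ∈ T) : rnk T i < T.card := by
  have h1 : T.filter (· < i) ⊆ T.erase i := by
    intro x hx
    have := mem_filter.mp hx
    exact mem_erase.mpr ⟨this.2.ne, this.1⟩
  exact lt_of_le_of_lt (card_le_card h1) (card_erase_lt_of_mem hi)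

lemma rnk_image (T : Finset (Fin N)) : T.image (rnk T) = range T.card := by
  apply eq_of_subset_of_card_le
  · intro t ht
    obtain ⟨i, hi, rfl⟩ := mem_image.mp ht
    exact mem_range.mpr (rnk_lt_card hi)
  · rw [card_range, card_image_of_injOn fun i hi j hj h => rnk_injOn hi hj h]

lemma rnk_zero_iff {T : Finset (Fin N)} (hT : T.Nonempty) {i : Fin N} (hi : i ∈ T) :
    rnk T i = 0 ↔ i = T.min' hT := by
  constructor
  · intro h0
    have hfe : T.filter (· < i) = ∅ := card_eq_zero.mp h0
    have hle : i ≤ T.min' hT := by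
      by_contra hlt
      push_neg at hlt
      have : T.min' hT ∈ T.filter (· < i) := mem_filter.mpr ⟨T.min'_mem hT, hlt⟩
      rw [hfe] at this
      exact notMem_empty _ this
    exact le_antisymm (min'_le T i hi) hle |>.symm
  · rintro rfl
    rw [rnk, card_eq_zero]
    apply eq_empty_of_forall_notMem
    intro x hx
    have := mem_filter.mp hx
    exact absurd (min'_le T x this.1) (not_le.mpr this.2)

lemma prod_rank_factorial (T : Finset (Fin N)) (hT : T.Nonempty) (x y : ℝ) :
    ∏ i ∈ T, (if i = T.min' hT then x else y * (rnk T i : ℝ))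
      = x * y ^ (T.card - 1) * (Nat.factorial (T.card - 1) : ℝ) := by
  have step1 : ∏ i ∈ T, (if i = T.min' hT then x else y * (rnk T i : ℝ))
      = ∏ i ∈ T, (fun t : ℕ => if t = 0 then x else y * (t : ℝ)) (rnk T i) := by
    apply prod_congr rfl
    intro i hi
    show _ = if rnk T i = 0 then x else y * ((rnk T i : ℕ) : ℝ)
    by_cases h : i = T.min' hT
    · rw [if_pos h, if_pos ((rnk_zero_iff hT hi).mpr h)]
    · rw [if_neg h, if_neg (fun h0 => h ((rnk_zero_iff hT hi).mp h0))]
  rw [step1, ← prod_image (f := fun t : ℕ => if t = 0 then x else y * (t : ℝ))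
    (fun i hi j hj h => rnk_injOn hi hj h), rnk_image]
  obtain ⟨s, hs⟩ : ∃ s, T.card = s + 1 :=
    ⟨T.card - 1, (Nat.succ_pred_eq_of_pos (card_pos.mpr hT)).symm⟩
  rw [hs]
  simp only [Nat.add_sub_cancel]
  rw [Finset.prod_range_succ']
  simp only [Nat.succ_ne_zero, if_false, if_true, reduceIte, Nat.cast_add, Nat.cast_one]
  rw [prod_mul_distrib, prod_const]
  have hfac : ∏ i ∈ range s, ((i : ℝ) + 1) = (Nat.factorial s : ℝ) := by
    rw [← Finset.prod_range_add_one_eq_factorial, Nat.cast_prod]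
    exact prod_congr rfl fun i _ => by push_cast; ring
  rw [hfac, card_range]
  ring

lemma tele (ψ : ℕ → ℝ) (p q : ℕ) :
    ψ p * ∏ t ∈ Finset.Ico p (p + q), ψ (t + 1)
      = ψ (p + q) * ∏ t ∈ Finset.Ico p (p + q), ψ t := by
  induction q with
  | zero => simp
  | succ q ih =>
    rw [show p + (q + 1) = (p + q) + 1 by omega]
    rw [Finset.prod_Ico_succ_top (Nat.le_add_right p q),
      Finset.prod_Ico_succ_top (Nat.le_add_right p q), ← mul_assoc, ih]
    ring

/-! ### Denominators -/

def Dden (d : Fin N → Fin N → ℝ≥0∞) (f : ℝ≥0∞ → ℝ) (α : ℝ) (i : Fin N) : ℝ :=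
  α + ∑ j ∈ univ.erase i, f (d i j)

def Dden' (d : Fin N → Fin N → ℝ≥0∞) (f : ℝ≥0∞ → ℝ) (α : ℝ) (m i : Fin N) : ℝ :=
  α + ∑ j ∈ (univ.erase m).erase i, f (d i j)

def Kset (d : Fin N → Fin N → ℝ≥0∞) (A : Set ℝ≥0∞) (m : Fin N) : Finset (Fin N) :=
  univ.filter fun j => j ≠ m ∧ Erel d A j m

def KMset (d : Fin N → Fin N → ℝ≥0∞) (A : Set ℝ≥0∞) (m : Fin N) : Finset (Fin N) :=
  insert m (Kset d A m)

def KPset (d : Fin N → Fin N → ℝ≥0∞) (A : Set ℝ≥0∞) (m : Fin N) : Finset (Fin N) :=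
  (Kset d A m).filter fun i => m < i

section Dlems

variable {d : Fin N → Fin N → ℝ≥0∞} {A : Set ℝ≥0∞} {a α : ℝ} {f : ℝ≥0∞ → ℝ} {m : Fin N}
variable (hA : A = ∅ ∨ A = {0} ∨ A = {x : ℝ≥0∞ | x ≠ ⊤})
  (hseq : ∀ i j : Fin N, i < j → d i j = ⊤)
  (htri : ∀ i j k : Fin N,
      (min (d i j) (d j i) = 0 → min (d j k) (d k j) = 0 → min (d i k) (d k i) = 0) ∧
      (min (d i j) (d j i) ≠ ⊤ → min (d j k) (d k j) ≠ ⊤ → min (d i k) (d k i) ≠ ⊤))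
  (ha : 0 < a) (hα : 0 < α) (hf : f = A.indicator fun _ => a)

lemma mem_Kset {j : Fin N} : j ∈ Kset d A m ↔ j ≠ m ∧ Erel d A j m := by
  simp [Kset]

lemma mem_KMset {j : Fin N} : j ∈ KMset d A m ↔ j = m ∨ Erel d A j m := by
  simp only [KMset, mem_insert, mem_Kset]
  constructor
  · rintro (h | ⟨-, h⟩)
    · exact Or.inl h
    · exact Or.inr h
  · rintro (h | h)
    · exact Or.inl h
    · by_cases hj : j = m
      · exact Or.inl hj
      · exact Or.inr ⟨hj, h⟩

lemma mem_KPset {i : Fin N} : i ∈ KPset d A m ↔ Erel d A i m ∧ m < i := by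
  simp only [KPset, mem_filter, mem_Kset]
  constructor
  · rintro ⟨⟨-, h1⟩, h2⟩; exact ⟨h1, h2⟩
  · rintro ⟨h1, h2⟩; exact ⟨⟨h2.ne', h1⟩, h2⟩

include hA htri in
lemma KM_pair {i j : Fin N} (hi : i ∈ KMset d A m) (hj : j ∈ KMset d A m)
    (hij : i ≠ j) : Erel d A i j := by
  rw [mem_KMset] at hi hj
  rcases hi with rfl | hi
  · rcases hj with rfl | hj
    · exact absurd rfl hij
    · exact Esymm hj
  · rcases hj with rfl | hj
    · exact hi
    · exact Etrans hA htri hi (Esymm hj)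

include hf ha hα in
lemma weight_nonneg (i j : Fin N) : 0 ≤ ddcrpWeight d f α i j := by
  unfold ddcrpWeight
  split
  · exact hα.le
  · exact fnonneg hf ha _

include hf ha hα in
lemma Dden_pos (i : Fin N) : 0 < Dden d f α i :=
  add_pos_of_pos_of_nonneg hα (Finset.sum_nonneg fun j _ => fnonneg hf ha _)

include hf ha hα in
lemma Dden'_pos (i : Fin N) : 0 < Dden' d f α m i :=
  add_pos_of_pos_of_nonneg hα (Finset.sum_nonneg fun j _ => fnonneg hf ha _)

lemma Dden_split {i : Fin N} (him : i ≠ m) :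
    Dden d f α i = f (d i m) + Dden' d f α m i := by
  unfold Dden Dden'
  rw [← Finset.add_sum_erase (univ.erase i) (fun j => f (d i j))
    (mem_erase.mpr ⟨(Ne.symm him), mem_univ m⟩), Finset.erase_right_comm]
  ring

include hA hseq hf in
lemma fdim_eq {i : Fin N} (him : i ≠ m) :
    f (d i m) = if i ∈ KPset d A m then a else 0 := by
  rw [fval hA hseq a f hf him]
  congr 1
  rw [eq_iff_iff, mem_KPset]

include hA hseq htri hf in
lemma Dden_eq_KM {i : Fin N} (hi : i ∈ KMset d A m) :
    Dden d f α i = α + a * (rnk (KMset d A m) i : ℝ) := by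
  unfold Dden
  congr 1
  have h1 : ∀ j ∈ univ.erase i, f (d i j) = if Erel d A i j ∧ j < i then a else 0 := by
    intro j hj
    exact fval hA hseq a f hf (Ne.symm (mem_erase.mp hj).1)
  rw [Finset.sum_congr rfl h1, ← Finset.sum_filter, Finset.sum_const, nsmul_eq_mul]
  rw [show (univ.erase i).filter (fun j => Erel d A i j ∧ j < i)
      = (KMset d A m).filter (· < i) from ?_]
  · rw [mul_comm]; rfl
  · ext j
    simp only [mem_filter, mem_erase, mem_univ, true_and, and_true]
    constructor
    · rintro ⟨hji, hE, hlt⟩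
      refine ⟨mem_KMset.mpr ?_, hlt⟩
      by_cases hjm : j = m
      · exact Or.inl hjm
      · right
        rcases mem_KMset.mp hi with rfl | hi'
        · exact Esymm hE
        · exact Etrans hA htri (Esymm hE) hi'
    · rintro ⟨hjKM, hlt⟩
      exact ⟨hlt.ne, KM_pair hA htri hi hjKM hlt.ne', hlt⟩

include hA hseq htri hf in
lemma Dden'_eq_KM {i : Fin N} (hi : i ∈ KMset d A m) (him : i ≠ m) :
    Dden' d f α m i = α + a * (rnk ((KMset d A m).erase m) i : ℝ) := by
  unfold Dden'
  congr 1
  have h1 : ∀ j ∈ (univ.erase m).erase i, f (d i j) = if Erel d A i j ∧ j < i then a else 0 := by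
    intro j hj
    exact fval hA hseq a f hf (Ne.symm (mem_erase.mp hj).1)
  rw [Finset.sum_congr rfl h1, ← Finset.sum_filter, Finset.sum_const, nsmul_eq_mul]
  rw [show ((univ.erase m).erase i).filter (fun j => Erel d A i j ∧ j < i)
      = ((KMset d A m).erase m).filter (· < i) from ?_]
  · rw [mul_comm]; rfl
  · ext j
    simp only [mem_filter, mem_erase, mem_univ, true_and, and_true]
    constructor
    · rintro ⟨⟨hji, hjm⟩, hE, hlt⟩
      refine ⟨⟨hjm, mem_KMset.mpr ?_⟩, hlt⟩
      right
      rcases mem_KMset.mp hi with rfl | hi'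
      · exact Esymm hE
      · exact Etrans hA htri (Esymm hE) hi'
    · rintro ⟨⟨hjm, hjKM⟩, hlt⟩
      exact ⟨⟨hlt.ne, hjm⟩, KM_pair hA htri hi hjKM hlt.ne', hlt⟩

lemma rnk_KP_succ {i : Fin N} (hi : i ∈ KPset d A m) :
    rnk (KMset d A m) i = rnk ((KMset d A m).erase m) i + 1 := by
  unfold rnk
  have hins : (KMset d A m).filter (· < i)
      = insert m (((KMset d A m).erase m).filter (· < i)) := by
    ext j
    simp only [mem_filter, mem_insert, mem_erase]
    constructor
    · rintro ⟨hjKM, hlt⟩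
      by_cases hjm : j = m
      · exact Or.inl hjm
      · exact Or.inr ⟨⟨hjm, hjKM⟩, hlt⟩
    · rintro (rfl | ⟨⟨hjm, hjKM⟩, hlt⟩)
      · exact ⟨mem_KMset.mpr (Or.inl rfl), (mem_KPset.mp hi).2⟩
      · exact ⟨hjKM, hlt⟩
  rw [hins, card_insert_of_notMem (by simp)]

lemma card_KM : (KMset d A m).card = rnk (KMset d A m) m + (KPset d A m).card + 1 := by
  have h0 : m ∉ Kset d A m := by simp [mem_Kset]
  have h1 : (KMset d A m).card = (Kset d A m).card + 1 := card_insert_of_notMem h0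
  have h2 : rnk (KMset d A m) m = ((Kset d A m).filter (· < m)).card := by
    unfold rnk KMset
    congr 1
    ext j
    simp only [mem_filter, mem_insert]
    constructor
    · rintro ⟨hjm | hj, hlt⟩
      · exact absurd hlt (by rw [hjm]; exact lt_irrefl m)
      · exact ⟨hj, hlt⟩
    · rintro ⟨hj, hlt⟩; exact ⟨Or.inr hj, hlt⟩
  have h3 : ((Kset d A m).filter (· < m)).card + (KPset d A m).card = (Kset d A m).card := by
    rw [show KPset d A m = (Kset d A m).filter (fun j => ¬ j < m) from ?_]
    · exact card_filter_add_card_filter_not _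
    · unfold KPset
      apply filter_congr
      intro j hj
      rw [mem_Kset] at hj
      simp only [not_lt, eq_iff_iff]
      exact ⟨fun h => h.le, fun h => lt_of_le_of_ne h (Ne.symm hj.1)⟩
  omega

lemma KP_sub_erase : ∀ i ∈ KPset d A m, i ∈ (KMset d A m).erase m := by
  intro i hi
  rw [mem_KPset] at hi
  exact mem_erase.mpr ⟨hi.2.ne', mem_KMset.mpr (Or.inr hi.1)⟩

lemma KP_image : (KPset d A m).image (rnk ((KMset d A m).erase m))
    = Finset.Ico (rnk (KMset d A m) m)
        (rnk (KMset d A m) m + (KPset d A m).card) := by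
  apply eq_of_subset_of_card_le
  · intro t ht
    obtain ⟨i, hi, rfl⟩ := mem_image.mp ht
    rw [mem_Ico]
    constructor
    · have hsub : (KMset d A m).filter (· < m)
          ⊆ ((KMset d A m).erase m).filter (· < i) := by
        intro x hx
        have hx' := mem_filter.mp hx
        have hxi : x < i := hx'.2.trans (mem_KPset.mp hi).2
        exact mem_filter.mpr ⟨mem_erase.mpr ⟨hx'.2.ne, hx'.1⟩, hxi⟩
      exact card_le_card hsub
    · have h1 : rnk (KMset d A m) i < (KMset d A m).card :=
        rnk_lt_card (mem_of_mem_erase (KP_sub_erase i hi))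
      have h2 := rnk_KP_succ hi
      have h3 := card_KM (d := d) (A := A) (m := m)
      omega
  · rw [Nat.card_Ico, card_image_of_injOn
      (fun i hi j hj h => rnk_injOn (KP_sub_erase i hi) (KP_sub_erase j hj) h)]
    omega

include hA hseq htri hf in
lemma den_tele :
    (α + a * (rnk (KMset d A m) m : ℝ)) * ∏ i ∈ KPset d A m, Dden d f α i
      = (α + a * ((rnk (KMset d A m) m + (KPset d A m).card : ℕ) : ℝ))
        * ∏ i ∈ KPset d A m, Dden' d f α m i := by
  set ψ : ℕ → ℝ := fun t => α + a * (t : ℝ) with hψ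
  have h1 : ∏ i ∈ KPset d A m, Dden d f α i
      = ∏ i ∈ KPset d A m, (fun t => ψ (t + 1)) (rnk ((KMset d A m).erase m) i) := by
    apply prod_congr rfl
    intro i hi
    rw [Dden_eq_KM hA hseq htri hf (mem_of_mem_erase (KP_sub_erase i hi)), rnk_KP_succ hi]
  have h2 : ∏ i ∈ KPset d A m, Dden' d f α m i
      = ∏ i ∈ KPset d A m, ψ (rnk ((KMset d A m).erase m) i) := by
    apply prod_congr rfl
    intro i hi
    rw [Dden'_eq_KM hA hseq htri hf (mem_of_mem_erase (KP_sub_erase i hi))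
      (mem_erase.mp (KP_sub_erase i hi)).1]
  have hinj : ∀ x ∈ KPset d A m, ∀ y ∈ KPset d A m,
      rnk ((KMset d A m).erase m) x = rnk ((KMset d A m).erase m) y → x = y :=
    fun x hx y hy h => rnk_injOn (KP_sub_erase x hx) (KP_sub_erase y hy) h
  rw [h1, h2, ← prod_image (f := fun t => ψ (t + 1)) hinj, ← prod_image (f := ψ) hinj,
    KP_image]
  have := tele ψ (rnk (KMset d A m) m) ((KPset d A m).card)
  have hc : ψ (rnk (KMset d A m) m) = α + a * (rnk (KMset d A m) m : ℝ) := rfl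
  have hc2 : ψ (rnk (KMset d A m) m + (KPset d A m).card)
      = α + a * ((rnk (KMset d A m) m + (KPset d A m).card : ℕ) : ℝ) := rfl
  rw [← hc, ← hc2]
  exact this

end Dlems

/-! ### Numerators -/

def Vsum (d : Fin N → Fin N → ℝ≥0∞) (f : ℝ≥0∞ → ℝ) (α : ℝ) (S : Finset (Fin N))
    (i : Fin N) : ℝ := ∑ j ∈ S, ddcrpWeight d f α i j

def ClassesF (m : Fin N) (c0 : Fin N → Fin N) : Finset (Finset (Fin N)) :=
  (univ.filter (· ≠ m)).image (dcl m c0)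

lemma weight_self {d : Fin N → Fin N → ℝ≥0∞} {f : ℝ≥0∞ → ℝ} {α : ℝ} (i : Fin N) :
    ddcrpWeight d f α i i = α := if_pos rfl

lemma weight_ne {d : Fin N → Fin N → ℝ≥0∞} {f : ℝ≥0∞ → ℝ} {α : ℝ} {i j : Fin N}
    (h : j ≠ i) : ddcrpWeight d f α i j = f (d i j) := if_neg h

lemma mem_dcl {m : Fin N} {c0 : Fin N → Fin N} {x j : Fin N} :
    j ∈ dcl m c0 x ↔ j ≠ m ∧ sameTable c0 x j := by simp [dcl]

lemma dcl_self {m x : Fin N} {c0 : Fin N → Fin N} (hx : x ≠ m) : x ∈ dcl m c0 x :=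
  mem_dcl.mpr ⟨hx, st_refl c0 x⟩

lemma dcl_congr {m x y : Fin N} {c0 : Fin N → Fin N} (h : sameTable c0 x y) :
    dcl m c0 x = dcl m c0 y := by
  ext j
  simp only [mem_dcl]
  exact and_congr_right fun _ =>
    ⟨fun hh => st_trans (st_symm h) hh, fun hh => st_trans h hh⟩

lemma mem_ClassesF {m : Fin N} {c0 : Fin N → Fin N} {B : Finset (Fin N)} :
    B ∈ ClassesF m c0 ↔ ∃ x, x ≠ m ∧ B = dcl m c0 x := by
  simp only [ClassesF, mem_image, mem_filter, mem_univ, true_and]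
  constructor
  · rintro ⟨x, hx, rfl⟩; exact ⟨x, hx, rfl⟩
  · rintro ⟨x, hx, rfl⟩; exact ⟨x, hx, rfl⟩

lemma GoodB_iff {m : Fin N} {c0 : Fin N → Fin N} {B : Finset (Fin N)} :
    GoodB m c0 B ↔ B ∈ insert ∅ (ClassesF m c0) := by
  rw [mem_insert, mem_ClassesF]; rfl

lemma empty_not_mem_ClassesF {m : Fin N} {c0 : Fin N → Fin N} :
    ∅ ∉ ClassesF m c0 := by
  rw [mem_ClassesF]
  rintro ⟨x, hx, h⟩
  exact notMem_empty x (h ▸ dcl_self hx)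

section Vlems

variable {d : Fin N → Fin N → ℝ≥0∞} {A : Set ℝ≥0∞} {a α : ℝ} {f : ℝ≥0∞ → ℝ}
  {m : Fin N} {c0 : Fin N → Fin N}
variable (hA : A = ∅ ∨ A = {0} ∨ A = {x : ℝ≥0∞ | x ≠ ⊤})
  (hseq : ∀ i j : Fin N, i < j → d i j = ⊤)
  (htri : ∀ i j k : Fin N,
      (min (d i j) (d j i) = 0 → min (d j k) (d k j) = 0 → min (d i k) (d k i) = 0) ∧
      (min (d i j) (d j i) ≠ ⊤ → min (d j k) (d k j) ≠ ⊤ → min (d i k) (d k i) ≠ ⊤))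
  (ha : 0 < a) (hα : 0 < α) (hf : f = A.indicator fun _ => a)
  (hv0 : Valid c0) (hF0 : Form m c0)

include hA hseq ha hf in
lemma prod_Vsum_rank (T : Finset (Fin N)) (hT : T.Nonempty)
    (hpair : ∀ i ∈ T, ∀ j ∈ T, j < i → Erel d A i j) :
    ∏ i ∈ T, Vsum d f α (if i = T.min' hT then ({i} : Finset (Fin N))
        else T.filter (· < i)) i
      = α * a ^ (T.card - 1) * (Nat.factorial (T.card - 1) : ℝ) := by
  rw [← prod_rank_factorial T hT α a]
  apply prod_congr rfl
  intro i hi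
  by_cases h : i = T.min' hT
  · rw [if_pos h, if_pos h]
    unfold Vsum
    rw [sum_singleton, weight_self]
  · rw [if_neg h, if_neg h]
    unfold Vsum
    have hstep : ∀ j ∈ T.filter (· < i), ddcrpWeight d f α i j = a := by
      intro j hj
      have hj' := mem_filter.mp hj
      rw [weight_ne hj'.2.ne, fval hA hseq a f hf hj'.2.ne',
        if_pos ⟨hpair i hi j hj'.1 hj'.2, hj'.2⟩]
    rw [sum_congr rfl hstep, sum_const, nsmul_eq_mul, rnk, mul_comm]

include hv0 hF0 in
lemma root_mem_dcl {i : Fin N} (him : i ≠ m) : root c0 i ∈ dcl m c0 i := by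
  refine mem_dcl.mpr ⟨?_, st_root c0 i⟩
  intro h
  exact him (form_st_m m hF0 (by rw [← h]; exact st_root c0 i))

include hv0 hF0 in
lemma root_eq_min_dcl {x i : Fin N} (hx : x ≠ m) (hi : i ∈ dcl m c0 x)
    (hB : (dcl m c0 x).Nonempty) : root c0 i = (dcl m c0 x).min' hB := by
  obtain ⟨him, hst⟩ := mem_dcl.mp hi
  apply le_antisymm
  · apply Finset.le_min'
    intro y hy
    obtain ⟨hym, hsty⟩ := mem_dcl.mp hy
    exact root_le_of_st hv0 (st_trans (st_symm hst) hsty)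
  · apply Finset.min'_le
    rw [dcl_congr hst]
    exact root_mem_dcl hv0 hF0 him

include hv0 hF0 in
lemma Vset'_eq_dcl {x i : Fin N} (hx : x ≠ m) (hi : i ∈ dcl m c0 x)
    (hB : (dcl m c0 x).Nonempty) :
    Vset' c0 i = if i = (dcl m c0 x).min' hB then ({i} : Finset (Fin N))
      else (dcl m c0 x).filter (· < i) := by
  obtain ⟨him, hst⟩ := mem_dcl.mp hi
  have hroot := root_eq_min_dcl hv0 hF0 hx hi hB
  by_cases h : i = (dcl m c0 x).min' hB
  · rw [if_pos h]
    have hri : root c0 i = i := hroot.trans h.symm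
    ext j
    rw [mem_Vset', mem_singleton]
    constructor
    · rintro ⟨-, -, hiff⟩
      exact hiff.mpr hri
    · intro hji
      rw [hji]
      exact ⟨st_refl c0 i, le_refl i, iff_of_true rfl hri⟩
  · rw [if_neg h]
    have hri : root c0 i ≠ i := fun hh => h (hh.symm.trans hroot)
    ext j
    rw [mem_Vset', mem_filter]
    constructor
    · rintro ⟨hstj, hle, hiff⟩
      have hji : j ≠ i := fun hh => hri (hiff.mp hh)
      have hjm : j ≠ m := by
        intro hh
        exact him (form_st_m m hF0 (by rw [← hh]; exact hstj))
      exact ⟨mem_dcl.mpr ⟨hjm, st_trans hst hstj⟩, lt_of_le_of_ne hle hji⟩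
    · rintro ⟨hjB, hlt⟩
      obtain ⟨hjm, hstj⟩ := mem_dcl.mp hjB
      exact ⟨st_trans (st_symm hst) hstj, hlt.le,
        iff_of_false hlt.ne (fun hh => hri hh)⟩

include hA hseq ha hf hv0 hF0 in
lemma prod_V'_block {x : Fin N} (hx : x ≠ m) (hsub : dcl m c0 x ⊆ Kset d A m)
    (hpair : ∀ i ∈ dcl m c0 x, ∀ j ∈ dcl m c0 x, j < i → Erel d A i j) :
    ∏ i ∈ dcl m c0 x, Vsum d f α (Vset' c0 i) i
      = α * a ^ ((dcl m c0 x).card - 1)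
        * (Nat.factorial ((dcl m c0 x).card - 1) : ℝ) := by
  have hB : (dcl m c0 x).Nonempty := ⟨x, dcl_self hx⟩
  rw [← prod_Vsum_rank hA hseq ha hf (dcl m c0 x) hB hpair]
  apply prod_congr rfl
  intro i hi
  rw [Vset'_eq_dcl hv0 hF0 hx hi hB]

include hv0 hF0 in
lemma Vset'_m_eq : Vset' c0 m = ({m} : Finset (Fin N)) := by
  have hroot : root c0 m = m := (root_eq_self_iff hv0).mp hF0.1
  ext j
  rw [mem_Vset', mem_singleton]
  constructor
  · rintro ⟨-, -, hiff⟩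
    exact hiff.mpr hroot
  · intro hjm
    rw [hjm]
    exact ⟨st_refl c0 m, le_refl m, iff_of_true rfl hroot⟩

lemma VsetB_mem_min {B : Finset (Fin N)} {i : Fin N} (hiT : i ∈ TB m B)
    (h : i = (TB m B).min' (TB_ne m B)) : VsetB m c0 B i = {i} := by
  unfold VsetB; rw [if_pos hiT, if_pos h]

lemma VsetB_mem_ne {B : Finset (Fin N)} {i : Fin N} (hiT : i ∈ TB m B)
    (h : i ≠ (TB m B).min' (TB_ne m B)) :
    VsetB m c0 B i = (TB m B).filter (· < i) := by
  unfold VsetB; rw [if_pos hiT, if_neg h]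

lemma VsetB_not_mem {B : Finset (Fin N)} {i : Fin N} (hiT : i ∉ TB m B) :
    VsetB m c0 B i = Vset' c0 i := by
  unfold VsetB; rw [if_neg hiT]

include hA hseq ha hf in
lemma num_zero_helper {B : Finset (Fin N)} (hB : B.Nonempty) (hmB : m ∉ B)
    (h1 : ∀ j ∈ B, j < m → ¬ Erel d A m j)
    (h2 : ¬ Erel d A (B.min' hB) m) :
    ∏ i : Fin N, Vsum d f α (VsetB m c0 B i) i = 0 := by
  by_cases hmT : m = (TB m B).min' (TB_ne m B)
  · set s := B.min' hB with hs
    have hsB : s ∈ B := B.min'_mem hB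
    have hsm : s ≠ m := fun h => hmB (h ▸ hsB)
    have hsT : s ∈ TB m B := mem_insert_of_mem hsB
    have hsmin : s ≠ (TB m B).min' (TB_ne m B) := fun h => hsm (h.trans hmT.symm)
    apply prod_eq_zero (mem_univ s)
    rw [VsetB_mem_ne hsT hsmin]
    apply sum_eq_zero
    intro j hj
    have hj' := mem_filter.mp hj
    have hjm : j = m := by
      rcases mem_insert.mp hj'.1 with h | hjB
      · exact h
      · exact absurd hj'.2 (not_lt.mpr (B.min'_le j hjB))
    have hjs : j ≠ s := hj'.2.ne
    rw [weight_ne hjs, hjm, fval hA hseq a f hf hsm,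
      if_neg (fun hh => h2 hh.1)]
  · have hmTm : m ∈ TB m B := mem_insert_self m B
    apply prod_eq_zero (mem_univ m)
    rw [VsetB_mem_ne hmTm hmT]
    apply sum_eq_zero
    intro j hj
    have hj' := mem_filter.mp hj
    have hjm : j ≠ m := hj'.2.ne
    have hjB : j ∈ B := (mem_insert.mp hj'.1).resolve_left hjm
    rw [weight_ne hjm, fval hA hseq a f hf (Ne.symm hjm),
      if_neg (fun hh => h1 j hjB hj'.2 hh.1)]

include hv0 hF0 in
lemma num_empty : ∏ i : Fin N, Vsum d f α (VsetB m c0 ∅ i) i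
    = α * ∏ i ∈ univ.erase m, Vsum d f α (Vset' c0 i) i := by
  rw [← mul_prod_erase univ _ (mem_univ m)]
  congr 1
  · have hmT : m ∈ TB m ∅ := mem_insert_self _ _
    have hTone : TB m (∅ : Finset (Fin N)) = {m} := rfl
    have hmin : m = (TB m (∅ : Finset (Fin N))).min' (TB_ne m ∅) := by
      apply le_antisymm
      · apply Finset.le_min'
        intro y hy
        rw [hTone, mem_singleton] at hy
        rw [hy]
      · exact Finset.min'_le _ _ hmT
    rw [VsetB_mem_min hmT hmin]
    unfold Vsum
    rw [sum_singleton, weight_self]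
  · apply prod_congr rfl
    intro i hi
    have him : i ≠ m := (mem_erase.mp hi).1
    have hiT : i ∉ TB m (∅ : Finset (Fin N)) := by
      rw [show TB m (∅ : Finset (Fin N)) = {m} from rfl, mem_singleton]
      exact him
    rw [VsetB_not_mem hiT]

include hA hseq htri ha hf hv0 hF0 in
lemma num_block {x : Fin N} (hx : x ≠ m) (hsub : dcl m c0 x ⊆ Kset d A m) :
    ∏ i : Fin N, Vsum d f α (VsetB m c0 (dcl m c0 x) i) i
      = a * ((dcl m c0 x).card : ℝ)
        * ∏ i ∈ univ.erase m, Vsum d f α (Vset' c0 i) i := by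
  set B := dcl m c0 x with hBdef
  have hBne : B.Nonempty := ⟨x, dcl_self hx⟩
  have hmB : m ∉ B := fun h => (mem_dcl.mp h).1 rfl
  have hTcard : (TB m B).card = B.card + 1 := card_insert_of_notMem hmB
  have hTsubKM : ∀ i ∈ TB m B, i ∈ KMset d A m := by
    intro i hi
    rcases mem_insert.mp hi with h | h
    · exact mem_KMset.mpr (Or.inl h)
    · exact mem_KMset.mpr (Or.inr (mem_Kset.mp (hsub h)).2)
  have hTpair : ∀ i ∈ TB m B, ∀ j ∈ TB m B, j < i → Erel d A i j :=
    fun i hi j hj hlt => KM_pair hA htri (hTsubKM i hi) (hTsubKM j hj) hlt.ne'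
  have hBpair : ∀ i ∈ B, ∀ j ∈ B, j < i → Erel d A i j :=
    fun i hi j hj hlt => hTpair i (mem_insert_of_mem hi) j (mem_insert_of_mem hj) hlt
  have hBsub_erase : B ⊆ univ.erase m := by
    intro i hi
    exact mem_erase.mpr ⟨(mem_dcl.mp hi).1, mem_univ i⟩
  rw [← prod_mul_prod_compl (TB m B) (fun i => Vsum d f α (VsetB m c0 B i) i)]
  have hTprod : ∏ i ∈ TB m B, Vsum d f α (VsetB m c0 B i) i
      = α * a ^ B.card * (Nat.factorial B.card : ℝ) := by
    have hcongr : ∏ i ∈ TB m B, Vsum d f α (VsetB m c0 B i) i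
        = ∏ i ∈ TB m B, Vsum d f α (if i = (TB m B).min' (TB_ne m B)
            then ({i} : Finset (Fin N)) else (TB m B).filter (· < i)) i := by
      apply prod_congr rfl
      intro i hi
      by_cases h : i = (TB m B).min' (TB_ne m B)
      · rw [VsetB_mem_min hi h, if_pos h]
      · rw [VsetB_mem_ne hi h, if_neg h]
    rw [hcongr, prod_Vsum_rank hA hseq ha hf (TB m B) (TB_ne m B) hTpair, hTcard]
    simp only [Nat.add_sub_cancel]
  have hCprod : ∏ i ∈ (TB m B)ᶜ, Vsum d f α (VsetB m c0 B i) i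
      = ∏ i ∈ (univ.erase m) \ B, Vsum d f α (Vset' c0 i) i := by
    have hset : (TB m B)ᶜ = (univ.erase m) \ B := by
      ext i
      simp only [mem_compl, TB, mem_insert, mem_sdiff, mem_erase, mem_univ, and_true,
        true_and]
      tauto
    rw [hset]
    apply prod_congr rfl
    intro i hi
    have hiT : i ∉ TB m B := by
      rw [← hset] at hi
      exact mem_compl.mp hi
    rw [VsetB_not_mem hiT]
  have hnum' : ∏ i ∈ univ.erase m, Vsum d f α (Vset' c0 i) i
      = (∏ i ∈ (univ.erase m) \ B, Vsum d f α (Vset' c0 i) i)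
        * ∏ i ∈ B, Vsum d f α (Vset' c0 i) i :=
    (prod_sdiff hBsub_erase).symm
  rw [hTprod, hCprod, hnum', prod_V'_block hA hseq ha hf hv0 hF0 hx hsub hBpair]
  obtain ⟨s, hscard⟩ : ∃ s, B.card = s + 1 :=
    ⟨B.card - 1, (Nat.succ_pred_eq_of_pos (card_pos.mpr hBne)).symm⟩
  rw [hscard]
  simp only [Nat.add_sub_cancel]
  push_cast [Nat.factorial_succ]
  ring

include hA hseq htri ha hα hf hv0 hF0 in
lemma root_Erel (hVpos : ∀ i, i ≠ m → Vsum d f α (Vset' c0 i) i ≠ 0) :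
    ∀ i, i ≠ m → root c0 i ≠ i → Erel d A i (root c0 i) := by
  refine finStrongInd fun i IH him hroot => ?_
  have hVne := hVpos i him
  obtain ⟨j, hjV, hwne⟩ := Finset.exists_ne_zero_of_sum_ne_zero hVne
  obtain ⟨hst, hle, hiff⟩ := mem_Vset'.mp hjV
  have hji : j ≠ i := fun hh => hroot (hiff.mp hh)
  have hlt : j < i := lt_of_le_of_ne hle hji
  have hjm : j ≠ m := by
    intro hh
    exact him (form_st_m m hF0 (by rw [← hh]; exact hst))
  have hE : Erel d A i j := by
    by_contra hE
    rw [weight_ne hji, fval hA hseq a f hf hji.symm, if_neg (fun hh => hE hh.1)] at hwne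
    exact hwne rfl
  have hrr : root c0 j = root c0 i := (st_root_eq hv0 hst).symm
  by_cases h : root c0 j = j
  · rw [← hrr, h]
    exact hE
  · have h2 := IH j hlt hjm h
    have h3 := Etrans hA htri hE h2
    rwa [hrr] at h3

include hA hseq htri ha hα hf hv0 hF0 in
lemma class_pairwise (hVpos : ∀ i, i ≠ m → Vsum d f α (Vset' c0 i) i ≠ 0)
    {x y : Fin N} (hx : x ≠ m) (hy : y ≠ m) (hst : sameTable c0 x y)
    (hxy : x ≠ y) : Erel d A x y := by
  have hr : root c0 x = root c0 y := st_root_eq hv0 hst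
  by_cases h1 : root c0 x = x
  · have h2 : root c0 y ≠ y := by
      rw [← hr, h1]
      intro h
      exact hxy h
    have := root_Erel hA hseq htri ha hα hf hv0 hF0 hVpos y hy h2
    rw [← hr, h1] at this
    exact Esymm this
  · by_cases h2 : root c0 y = y
    · have := root_Erel hA hseq htri ha hα hf hv0 hF0 hVpos x hx h1
      rwa [hr, h2] at this
    · have hEx := root_Erel hA hseq htri ha hα hf hv0 hF0 hVpos x hx h1
      have hEy := root_Erel hA hseq htri ha hα hf hv0 hF0 hVpos y hy h2
      rw [← hr] at hEy
      exact Etrans hA htri hEx (Esymm hEy)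

include hA hseq htri ha hα hf hv0 hF0 in
lemma class_K_dichotomy (hVpos : ∀ i, i ≠ m → Vsum d f α (Vset' c0 i) i ≠ 0)
    {x : Fin N} (hx : x ≠ m) :
    (dcl m c0 x ⊆ Kset d A m) ∨ (∀ j ∈ dcl m c0 x, j ∉ Kset d A m) := by
  by_cases hk : ∃ k ∈ dcl m c0 x, k ∈ Kset d A m
  · obtain ⟨k, hkB, hkK⟩ := hk
    left
    intro j hjB
    obtain ⟨hjm, hstj⟩ := mem_dcl.mp hjB
    obtain ⟨hkm, hstk⟩ := mem_dcl.mp hkB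
    by_cases hjk : j = k
    · rw [hjk]; exact hkK
    · have hE : Erel d A j k :=
        class_pairwise hA hseq htri ha hα hf hv0 hF0 hVpos hjm hkm
          (st_trans (st_symm hstj) hstk) hjk
      exact mem_Kset.mpr ⟨hjm, Etrans hA htri hE (mem_Kset.mp hkK).2⟩
  · push_neg at hk
    right
    exact hk

include hA hseq htri ha hα hf hv0 hF0 in
lemma dagger :
    ∑ B ∈ insert ∅ (ClassesF m c0),
        ∏ i : Fin N, (Vsum d f α (VsetB m c0 B i) i / Dden d f α i)
      = ∏ i ∈ univ.erase m, (Vsum d f α (Vset' c0 i) i / Dden' d f α m i) := by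
  set p := rnk (KMset d A m) m with hp
  set q := (KPset d A m).card with hq
  have hβpos : (0:ℝ) < α + a * ((p + q : ℕ) : ℝ) := by
    have h0 : (0:ℝ) ≤ a * ((p + q : ℕ) : ℝ) := mul_nonneg ha.le (Nat.cast_nonneg _)
    linarith
  have hKP_sub_erase : KPset d A m ⊆ univ.erase m := fun i hi =>
    mem_erase.mpr ⟨(mem_KPset.mp hi).2.ne', mem_univ i⟩
  have hDden'_off : ∀ i ∈ (univ.erase m) \ KPset d A m,
      Dden d f α i = Dden' d f α m i := by
    intro i hi
    obtain ⟨hi1, hi2⟩ := mem_sdiff.mp hi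
    have him : i ≠ m := (mem_erase.mp hi1).1
    rw [Dden_split him, fdim_eq hA hseq hf him, if_neg hi2, zero_add]
  have hDelta : ∏ i : Fin N, Dden d f α i
      = (α + a * ((p + q : ℕ) : ℝ)) * ∏ i ∈ univ.erase m, Dden' d f α m i := by
    rw [← mul_prod_erase univ _ (mem_univ m),
      ← prod_sdiff hKP_sub_erase (f := Dden d f α),
      ← prod_sdiff hKP_sub_erase (f := Dden' d f α m),
      prod_congr rfl hDden'_off]
    have hDm : Dden d f α m = α + a * (p : ℝ) :=
      Dden_eq_KM hA hseq htri hf (mem_KMset.mpr (Or.inl rfl))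
    have htel := den_tele hA hseq htri hf (d := d) (A := A) (a := a) (α := α)
      (f := f) (m := m)
    rw [hDm]
    calc (α + a * (p:ℝ)) * ((∏ i ∈ (univ.erase m) \ KPset d A m, Dden' d f α m i)
          * ∏ i ∈ KPset d A m, Dden d f α i)
        = (∏ i ∈ (univ.erase m) \ KPset d A m, Dden' d f α m i)
          * ((α + a * (p:ℝ)) * ∏ i ∈ KPset d A m, Dden d f α i) := by ring
      _ = (∏ i ∈ (univ.erase m) \ KPset d A m, Dden' d f α m i)
          * ((α + a * ((p + q : ℕ):ℝ)) * ∏ i ∈ KPset d A m, Dden' d f α m i) := by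
            rw [htel]
      _ = _ := by ring
  have hLrw : ∀ B : Finset (Fin N),
      ∏ i : Fin N, (Vsum d f α (VsetB m c0 B i) i / Dden d f α i)
      = (∏ i : Fin N, Vsum d f α (VsetB m c0 B i) i) / ∏ i : Fin N, Dden d f α i :=
    fun B => prod_div_distrib _ _
  rw [sum_congr rfl (fun B _ => hLrw B), ← sum_div, prod_div_distrib, hDelta]
  by_cases hz : ∃ i ∈ univ.erase m, Vsum d f α (Vset' c0 i) i = 0
  · obtain ⟨i0, hi0, hV0⟩ := hz
    have him0 : i0 ≠ m := (mem_erase.mp hi0).1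
    have hnum0 : ∏ i ∈ univ.erase m, Vsum d f α (Vset' c0 i) i = 0 :=
      prod_eq_zero hi0 hV0
    rw [hnum0, zero_div]
    rw [show (∑ B ∈ insert ∅ (ClassesF m c0),
        ∏ i : Fin N, Vsum d f α (VsetB m c0 B i) i) = 0 from ?_]
    · exact zero_div _
    apply sum_eq_zero
    intro B hB
    have hw0 : ∀ j ∈ Vset' c0 i0, ddcrpWeight d f α i0 j = 0 :=
      (sum_eq_zero_iff_of_nonneg (fun j _ => weight_nonneg ha hα hf i0 j)).mp hV0
    have hroot : root c0 i0 ≠ i0 := by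
      intro h
      have hmem : i0 ∈ Vset' c0 i0 :=
        mem_Vset'.mpr ⟨st_refl c0 i0, le_refl i0, iff_of_true rfl h⟩
      have hcontr := hw0 i0 hmem
      rw [weight_self] at hcontr
      exact hα.ne' hcontr
    have hnE : ∀ j, sameTable c0 i0 j → j < i0 → ¬ Erel d A i0 j := by
      intro j hst hlt hE
      have hmem : j ∈ Vset' c0 i0 :=
        mem_Vset'.mpr ⟨hst, hlt.le, iff_of_false hlt.ne hroot⟩
      have hcontr := hw0 j hmem
      rw [weight_ne hlt.ne, fval hA hseq a f hf hlt.ne', if_pos ⟨hE, hlt⟩] at hcontr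
      exact ha.ne' hcontr
    rcases mem_insert.mp hB with h | hBc
    · rw [h, num_empty hv0 hF0, hnum0, mul_zero]
    · obtain ⟨x, hx, rfl⟩ := mem_ClassesF.mp hBc
      by_cases hi0B : i0 ∈ dcl m c0 x
      · have hstxi0 : sameTable c0 x i0 := (mem_dcl.mp hi0B).2
        have hBeq : dcl m c0 x = dcl m c0 i0 := dcl_congr hstxi0
        have hBne : (dcl m c0 x).Nonempty := ⟨x, dcl_self hx⟩
        have hmB : m ∉ dcl m c0 x := fun h => (mem_dcl.mp h).1 rfl
        have hrB : root c0 i0 ∈ dcl m c0 x := by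
          rw [hBeq]; exact root_mem_dcl hv0 hF0 him0
        have hrlt : root c0 i0 < i0 := lt_of_le_of_ne (root_le c0 i0) hroot
        have hsmem : (dcl m c0 x).min' hBne ∈ dcl m c0 x := min'_mem _ _
        have hsne : (dcl m c0 x).min' hBne ≠ i0 := by
          intro h
          have hle2 := min'_le (dcl m c0 x) (root c0 i0) hrB
          rw [h] at hle2
          exact absurd hle2 (not_le.mpr hrlt)
        have hslt : (dcl m c0 x).min' hBne < i0 :=
          lt_of_le_of_ne (min'_le _ _ hi0B) hsne
        have hstclass : ∀ j ∈ dcl m c0 x, sameTable c0 i0 j := by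
          intro j hj
          rw [hBeq] at hj
          exact (mem_dcl.mp hj).2
        by_cases hEm : Erel d A i0 m ∧ m < i0
        · have hq2 : ∀ j ∈ dcl m c0 x, j < i0 → ¬ Erel d A j m := by
            intro j hjB hlt hE
            exact hnE j (hstclass j hjB) hlt (Etrans hA htri hEm.1 (Esymm hE))
          apply num_zero_helper hA hseq ha hf hBne hmB
          · intro j hjB hjlt hE
            exact hq2 j hjB (hjlt.trans hEm.2) (Esymm hE)
          · exact hq2 _ hsmem hslt
        · apply prod_eq_zero (mem_univ i0)
          have hi0T : i0 ∈ TB m (dcl m c0 x) := mem_insert_of_mem hi0B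
          have hminT : i0 ≠ (TB m (dcl m c0 x)).min' (TB_ne m _) := by
            intro h
            have hle2 := min'_le (TB m (dcl m c0 x)) (root c0 i0)
              (mem_insert_of_mem hrB)
            rw [← h] at hle2
            exact absurd hle2 (not_le.mpr hrlt)
          rw [VsetB_mem_ne hi0T hminT]
          apply sum_eq_zero
          intro j hj
          obtain ⟨hjT, hjlt⟩ := mem_filter.mp hj
          rcases mem_insert.mp hjT with hjm | hjB
          · rw [weight_ne hjlt.ne, hjm, fval hA hseq a f hf him0, if_neg hEm]
          · rw [weight_ne hjlt.ne, fval hA hseq a f hf hjlt.ne',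
              if_neg (fun hh => hnE j (hstclass j hjB) hjlt hh.1)]
      · apply prod_eq_zero (mem_univ i0)
        have hi0T : i0 ∉ TB m (dcl m c0 x) := by
          intro h
          rcases mem_insert.mp h with h' | h'
          · exact him0 h'
          · exact hi0B h'
        rw [VsetB_not_mem hi0T, hV0]
  · push_neg at hz
    have hVpos : ∀ i, i ≠ m → Vsum d f α (Vset' c0 i) i ≠ 0 := fun i hi =>
      hz i (mem_erase.mpr ⟨hi, mem_univ i⟩)
    rw [sum_insert empty_not_mem_ClassesF, num_empty hv0 hF0]
    have hKcard : (Kset d A m).card = p + q := by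
      have h1 := card_KM (d := d) (A := A) (m := m)
      have h2 : (KMset d A m).card = (Kset d A m).card + 1 :=
        card_insert_of_notMem (by simp [mem_Kset])
      omega
    rw [← sum_filter_add_sum_filter_not (ClassesF m c0) (fun B => B ⊆ Kset d A m)
      (fun B => ∏ i : Fin N, Vsum d f α (VsetB m c0 B i) i)]
    have hzero : ∑ B ∈ (ClassesF m c0).filter (fun B => ¬ B ⊆ Kset d A m),
        ∏ i : Fin N, Vsum d f α (VsetB m c0 B i) i = 0 := by
      apply sum_eq_zero
      intro B hB
      obtain ⟨hBc, hBK⟩ := mem_filter.mp hB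
      obtain ⟨x, hx, rfl⟩ := mem_ClassesF.mp hBc
      have hnotK : ∀ j ∈ dcl m c0 x, j ∉ Kset d A m := by
        rcases class_K_dichotomy hA hseq htri ha hα hf hv0 hF0 hVpos hx with h | h
        · exact absurd h hBK
        · exact h
      have hBne : (dcl m c0 x).Nonempty := ⟨x, dcl_self hx⟩
      have hmB : m ∉ dcl m c0 x := fun h => (mem_dcl.mp h).1 rfl
      apply num_zero_helper hA hseq ha hf hBne hmB
      · intro j hjB hjlt hE
        exact hnotK j hjB (mem_Kset.mpr ⟨(mem_dcl.mp hjB).1, Esymm hE⟩)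
      · intro hE
        exact hnotK _ (min'_mem _ hBne)
          (mem_Kset.mpr ⟨(mem_dcl.mp (min'_mem _ hBne)).1, hE⟩)
    rw [hzero, add_zero]
    have hper : ∀ B ∈ (ClassesF m c0).filter (fun B => B ⊆ Kset d A m),
        ∏ i : Fin N, Vsum d f α (VsetB m c0 B i) i
        = (B.card : ℝ) * (a * ∏ i ∈ univ.erase m, Vsum d f α (Vset' c0 i) i) := by
      intro B hB
      obtain ⟨hBc, hsub⟩ := mem_filter.mp hB
      obtain ⟨x, hx, rfl⟩ := mem_ClassesF.mp hBc
      rw [num_block hA hseq htri ha hf hv0 hF0 hx hsub]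
      ring
    rw [sum_congr rfl hper, ← sum_mul]
    have hcards : ∑ B ∈ (ClassesF m c0).filter (fun B => B ⊆ Kset d A m),
        (B.card : ℝ) = ((Kset d A m).card : ℝ) := by
      have hdisj : ∀ B1 ∈ (ClassesF m c0).filter (fun B => B ⊆ Kset d A m),
          ∀ B2 ∈ (ClassesF m c0).filter (fun B => B ⊆ Kset d A m),
          B1 ≠ B2 → Disjoint B1 B2 := by
        intro B1 h1 B2 h2 hne
        obtain ⟨x1, hx1, rfl⟩ := mem_ClassesF.mp (mem_filter.mp h1).1
        obtain ⟨x2, hx2, rfl⟩ := mem_ClassesF.mp (mem_filter.mp h2).1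
        rw [disjoint_left]
        intro j hj1 hj2
        apply hne
        rw [dcl_congr (mem_dcl.mp hj1).2, dcl_congr (mem_dcl.mp hj2).2]
      have hbi : Kset d A m
          = ((ClassesF m c0).filter (fun B => B ⊆ Kset d A m)).biUnion id := by
        ext i
        simp only [mem_biUnion, id]
        constructor
        · intro hiK
          have him : i ≠ m := (mem_Kset.mp hiK).1
          refine ⟨dcl m c0 i, mem_filter.mpr ⟨mem_ClassesF.mpr ⟨i, him, rfl⟩, ?_⟩,
            dcl_self him⟩
          rcases class_K_dichotomy hA hseq htri ha hα hf hv0 hF0 hVpos him with h | h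
          · exact h
          · exact absurd hiK (h i (dcl_self him))
        · rintro ⟨B, hB, hiB⟩
          exact (mem_filter.mp hB).2 hiB
      have hcardnat : (Kset d A m).card
          = ∑ B ∈ (ClassesF m c0).filter (fun B => B ⊆ Kset d A m), B.card := by
        conv_lhs => rw [hbi]
        exact card_biUnion hdisj
      rw [hcardnat]
      push_cast
      rfl
    rw [hcards, hKcard]
    rw [show α * ∏ i ∈ univ.erase m, Vsum d f α (Vset' c0 i) i
        + ((p + q : ℕ) : ℝ) * (a * ∏ i ∈ univ.erase m, Vsum d f α (Vset' c0 i) i)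
        = (α + a * ((p + q : ℕ) : ℝ)) * ∏ i ∈ univ.erase m, Vsum d f α (Vset' c0 i) i
        by ring]
    exact mul_div_mul_left _ _ hβpos.ne'

include hv0 hF0 in
lemma rhs_fiber_eq (hcan : psi m c0 = c0) :
    ∑ c ∈ univ.filter (fun c => (Valid c ∧ Form m c) ∧ psi m c = c0),
        ddcrpProbOn (univ.erase m) d f α c
      = ∏ i ∈ univ.erase m, (Vsum d f α (Vset' c0 i) i / Dden' d f α m i) := by
  classical
  have hfe : univ.filter (fun c => (Valid c ∧ Form m c) ∧ psi m c = c0)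
      = Fintype.piFinset (fun i => Vset' c0 i) := by
    ext c
    rw [mem_filter, Fintype.mem_piFinset]
    constructor
    · rintro ⟨-, ⟨hv, hF⟩, hpsi⟩
      exact (charR hv0 hF0 hcan).mp ⟨hv, hF, hpsi⟩
    · intro h
      obtain ⟨hv, hF, hpsi⟩ := (charR hv0 hF0 hcan).mpr h
      exact ⟨mem_univ c, ⟨hv, hF⟩, hpsi⟩
  rw [hfe]
  set g : Fin N → Fin N → ℝ := fun i j =>
    if i = m then 1 else ddcrpWeight d f α i j / Dden' d f α m i with hg
  have hprob : ∀ c : Fin N → Fin N,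
      ddcrpProbOn (univ.erase m) d f α c = ∏ i : Fin N, g i (c i) := by
    intro c
    rw [← mul_prod_erase univ (fun i => g i (c i)) (mem_univ m)]
    have h1 : g m (c m) = 1 := by simp [hg]
    rw [h1, one_mul]
    unfold ddcrpProbOn
    apply prod_congr rfl
    intro i hi
    have h2 : g i (c i) = ddcrpWeight d f α i (c i) / Dden' d f α m i := by
      simp only [hg]; rw [if_neg (mem_erase.mp hi).1]
    rw [h2]
    rfl
  rw [sum_congr rfl fun c _ => hprob c,
    ← Finset.prod_univ_sum (fun i => Vset' c0 i) g]
  rw [← mul_prod_erase univ (fun i => ∑ j ∈ Vset' c0 i, g i j) (mem_univ m)]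
  have hm1 : (∑ j ∈ Vset' c0 m, g m j) = 1 := by
    rw [Vset'_m_eq hv0 hF0]
    simp [hg]
  rw [hm1, one_mul]
  apply prod_congr rfl
  intro i hi
  have hstep : ∀ j ∈ Vset' c0 i, g i j = ddcrpWeight d f α i j / Dden' d f α m i :=
    fun j _ => by simp only [hg]; rw [if_neg (mem_erase.mp hi).1]
  rw [sum_congr rfl hstep, ← sum_div]
  rfl

include hv0 hF0 in
lemma lhs_fiber_eq (hcan : psi m c0 = c0) :
    ∑ c ∈ univ.filter (fun c => Valid c ∧ psi m c = c0), ddcrpProb d f α c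
      = ∑ B ∈ insert ∅ (ClassesF m c0),
          ∏ i : Fin N, (Vsum d f α (VsetB m c0 B i) i / Dden d f α i) := by
  classical
  rw [← Finset.sum_fiberwise_of_maps_to (g := Bmap m) (t := univ)
    (fun c _ => mem_univ _) (ddcrpProb d f α)]
  have hfib : ∀ B : Finset (Fin N),
      ∑ c ∈ (univ.filter (fun c => Valid c ∧ psi m c = c0)).filter
          (fun c => Bmap m c = B), ddcrpProb d f α c
      = if GoodB m c0 B
          then ∏ i : Fin N, (Vsum d f α (VsetB m c0 B i) i / Dden d f α i)
          else 0 := by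
    intro B
    have hrelof : ∀ c, Valid c → psi m c = c0 →
        ∀ x y, x ≠ m → y ≠ m → (sameTable c x y ↔ sameTable c0 x y) := by
      intro c hv hpsi x y hx hy
      have h := psi_st m (c := c) hx hy
      rw [hpsi] at h
      exact h.symm
    by_cases hG : GoodB m c0 B
    · rw [if_pos hG]
      have hfe : (univ.filter (fun c => Valid c ∧ psi m c = c0)).filter
          (fun c => Bmap m c = B) = Fintype.piFinset (fun i => VsetB m c0 B i) := by
        ext c
        rw [mem_filter, mem_filter, Fintype.mem_piFinset]
        constructor
        · rintro ⟨⟨-, hv, hpsi⟩, hBm⟩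
          have hmem := (charL_mp hv0 hF0 hv (hrelof c hv hpsi)).2
          rw [hBm] at hmem
          exact hmem
        · intro hmem
          obtain ⟨hv, hrel, hBm⟩ := charL_mpr hv0 hF0 hG hmem
          refine ⟨⟨mem_univ c, hv, ?_⟩, hBm⟩
          rw [psi_congr m hrel, hcan]
      rw [hfe]
      have hprob : ∀ c : Fin N → Fin N, ddcrpProb d f α c
          = ∏ i : Fin N,
              (fun i j => ddcrpWeight d f α i j / Dden d f α i) i (c i) :=
        fun c => rfl
      rw [sum_congr rfl fun c _ => hprob c,
        ← Finset.prod_univ_sum (fun i => VsetB m c0 B i)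
          (fun i j => ddcrpWeight d f α i j / Dden d f α i)]
      apply prod_congr rfl
      intro i _
      rw [← sum_div]
      rfl
    · rw [if_neg hG]
      apply Finset.sum_eq_zero
      intro c hc
      exfalso
      rw [mem_filter, mem_filter] at hc
      obtain ⟨⟨-, hv, hpsi⟩, hBm⟩ := hc
      have := (charL_mp hv0 hF0 hv (hrelof c hv hpsi)).1
      rw [hBm] at this
      exact hG this
  rw [sum_congr rfl (fun B _ => hfib B), ← Finset.sum_filter]
  apply Finset.sum_congr
  · ext B
    rw [mem_filter]
    constructor
    · rintro ⟨-, h⟩; exact GoodB_iff.mp h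
    · intro h; exact ⟨mem_univ B, GoodB_iff.mpr h⟩
  · intro B _; rfl

end Vlems

/-! ### Main theorem -/

theorem main_thm {N : ℕ} (d : Fin N → Fin N → ℝ≥0∞)
    (hseq : ∀ i j : Fin N, i < j → d i j = ⊤)
    (htri : ∀ i j k : Fin N,
      (min (d i j) (d j i) = 0 → min (d j k) (d k j) = 0 → min (d i k) (d k i) = 0) ∧
      (min (d i j) (d j i) ≠ ⊤ → min (d j k) (d k j) ≠ ⊤ → min (d i k) (d k i) ≠ ⊤))
    (A : Set ℝ≥0∞) (hA : A = ∅ ∨ A = {0} ∨ A = {x : ℝ≥0∞ | x ≠ ⊤})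
    (a α : ℝ) (ha : 0 < a) (hα : 0 < α)
    (f : ℝ≥0∞ → ℝ) (hf : f = A.indicator fun _ => a) :
    MarginallyInvariant d f α := by
  intro m π
  classical
  have hweight0 : ∀ (c : Fin N → Fin N) (i : Fin N), ¬ c i ≤ i →
      ddcrpWeight d f α i (c i) = 0 := by
    intro c i h
    have hlt : i < c i := not_le.mp h
    rw [weight_ne hlt.ne', fval hA hseq a f hf hlt.ne]
    rw [if_neg]
    rintro ⟨-, hh⟩
    exact absurd hh (not_lt.mpr hlt.le)
  have hP0 : ∀ c, ¬ Valid c → ddcrpProb d f α c = 0 := by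
    intro c hv
    obtain ⟨i, hi⟩ := not_forall.mp hv
    unfold ddcrpProb ddcrpProbOn
    apply prod_eq_zero (mem_univ i)
    rw [hweight0 c i hi]
    exact zero_div _
  have hP0' : ∀ c, Form m c → ¬ Valid c →
      ddcrpProbOn (univ.erase m) d f α c = 0 := by
    intro c hF hv
    obtain ⟨i, hi⟩ := not_forall.mp hv
    have him : i ≠ m := by
      intro h
      rw [h] at hi
      exact hi (le_of_eq hF.1)
    unfold ddcrpProbOn
    apply prod_eq_zero (mem_erase.mpr ⟨him, mem_univ i⟩)
    rw [hweight0 c i hi]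
    exact zero_div _
  -- restrict both sides
  have step1 : (∑ c : Fin N → Fin N,
      Set.indicator {c | deleteCustomer m (tablePartition c) = π} (ddcrpProb d f α) c)
      = ∑ c ∈ univ.filter (fun c => Valid c),
          Set.indicator {c | deleteCustomer m (tablePartition c) = π}
            (ddcrpProb d f α) c := by
    rw [← Finset.sum_filter_add_sum_filter_not univ (fun c => Valid c)]
    rw [add_eq_left]
    apply Finset.sum_eq_zero
    intro c hc
    have hnv : ¬ Valid c := (mem_filter.mp hc).2
    rw [Set.indicator_apply]
    split
    · exact hP0 c hnv
    · rfl
  have step2 : (∑ c : Fin N → Fin N,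
      Set.indicator {c | c m = m ∧ (∀ i : Fin N, i ≠ m → c i ≠ m) ∧
          tablePartition c \ {({m} : Set (Fin N))} = π}
        (ddcrpProbOn (univ.erase m) d f α) c)
      = ∑ c ∈ univ.filter (fun c => Valid c ∧ Form m c),
          Set.indicator {c | c m = m ∧ (∀ i : Fin N, i ≠ m → c i ≠ m) ∧
              tablePartition c \ {({m} : Set (Fin N))} = π}
            (ddcrpProbOn (univ.erase m) d f α) c := by
    rw [← Finset.sum_filter_add_sum_filter_not univ (fun c => Valid c ∧ Form m c)]
    rw [add_eq_left]
    apply Finset.sum_eq_zero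
    intro c hc
    have hn : ¬ (Valid c ∧ Form m c) := (mem_filter.mp hc).2
    rw [Set.indicator_apply]
    split
    · next hmem =>
      obtain ⟨h1, h2, h3⟩ := hmem
      have hF : Form m c := ⟨h1, h2⟩
      by_cases hv : Valid c
      · exact absurd ⟨hv, hF⟩ hn
      · exact hP0' c hF hv
    · rfl
  rw [step1, step2]
  rw [← Finset.sum_fiberwise_of_maps_to (g := psi m) (t := univ)
    (fun c _ => mem_univ _)
    (Set.indicator {c | deleteCustomer m (tablePartition c) = π} (ddcrpProb d f α))]
  rw [← Finset.sum_fiberwise_of_maps_to (g := psi m) (t := univ)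
    (fun c _ => mem_univ _)
    (Set.indicator {c | c m = m ∧ (∀ i : Fin N, i ≠ m → c i ≠ m) ∧
        tablePartition c \ {({m} : Set (Fin N))} = π}
      (ddcrpProbOn (univ.erase m) d f α))]
  apply Finset.sum_congr rfl
  intro c0 _
  by_cases hcanon : Valid c0 ∧ Form m c0 ∧ psi m c0 = c0
  · obtain ⟨hv0, hF0, hcan⟩ := hcanon
    have hrelof : ∀ c, psi m c = c0 →
        ∀ x y, x ≠ m → y ≠ m → (sameTable c x y ↔ sameTable c0 x y) := by
      intro c hpsi x y hx hy
      have h := psi_st m (c := c) hx hy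
      rw [hpsi] at h
      exact h.symm
    have hindL : ∀ c ∈ (univ.filter (fun c => Valid c)).filter (fun c => psi m c = c0),
        Set.indicator {c | deleteCustomer m (tablePartition c) = π}
          (ddcrpProb d f α) c
        = if deleteCustomer m (tablePartition c0) = π then ddcrpProb d f α c
            else 0 := by
      intro c hc
      rw [mem_filter] at hc
      have hpsi : psi m c = c0 := hc.2
      have hdel : deleteCustomer m (tablePartition c)
          = deleteCustomer m (tablePartition c0) := delete_eq (hrelof c hpsi)
      rw [Set.indicator_apply]
      congr 1
      rw [eq_iff_iff, Set.mem_setOf_eq, hdel]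
    have hindR : ∀ c ∈ (univ.filter (fun c => Valid c ∧ Form m c)).filter
        (fun c => psi m c = c0),
        Set.indicator {c | c m = m ∧ (∀ i : Fin N, i ≠ m → c i ≠ m) ∧
            tablePartition c \ {({m} : Set (Fin N))} = π}
          (ddcrpProbOn (univ.erase m) d f α) c
        = if deleteCustomer m (tablePartition c0) = π
            then ddcrpProbOn (univ.erase m) d f α c else 0 := by
      intro c hc
      rw [mem_filter, mem_filter] at hc
      obtain ⟨⟨-, hv, hF⟩, hpsi⟩ := hc
      have hdel : deleteCustomer m (tablePartition c)
          = deleteCustomer m (tablePartition c0) := delete_eq (hrelof c hpsi)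
      rw [Set.indicator_apply]
      congr 1
      rw [eq_iff_iff, Set.mem_setOf_eq]
      constructor
      · rintro ⟨-, -, h3⟩
        rw [← hdel, ← form_delete hF, h3]
      · intro h
        exact ⟨hF.1, hF.2, by rw [form_delete hF, hdel, h]⟩
    rw [Finset.sum_congr rfl hindL, Finset.sum_congr rfl hindR]
    by_cases hπ : deleteCustomer m (tablePartition c0) = π
    · simp only [if_pos hπ]
      have hLfe : (univ.filter (fun c => Valid c)).filter (fun c => psi m c = c0)
          = univ.filter (fun c => Valid c ∧ psi m c = c0) := by
        rw [Finset.filter_filter]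
      have hRfe : (univ.filter (fun c => Valid c ∧ Form m c)).filter
            (fun c => psi m c = c0)
          = univ.filter (fun c => (Valid c ∧ Form m c) ∧ psi m c = c0) := by
        rw [Finset.filter_filter]
      rw [hLfe, hRfe]
      rw [lhs_fiber_eq hv0 hF0 hcan, dagger hA hseq htri ha hα hf hv0 hF0,
        rhs_fiber_eq hv0 hF0 hcan]
    · simp only [if_neg hπ, Finset.sum_const_zero]
  · have hempty : ∀ c, Valid c → psi m c = c0 → False := by
      intro c hv hpsi
      apply hcanon
      rw [← hpsi]
      exact ⟨psi_valid m c, psi_form m c, psi_idem m c⟩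
    rw [Finset.sum_eq_zero, Finset.sum_eq_zero]
    · intro c hc
      rw [mem_filter, mem_filter] at hc
      exact absurd (hempty c hc.1.2.1 hc.2) not_false
    · intro c hc
      rw [mem_filter, mem_filter] at hc
      exact absurd (hempty c hc.1.2 hc.2) not_false

end DDCRP

/-- for `N ≥ 2` customers with sequential distances satisfying the
relaxed triangle inequality, and decay function `f = a · 1[· ∈ A]` with
`A ∈ {∅, {0}, [0,∞)}` and `a, α > 0`, the ddCRP is marginally invariant. -/
theorem stmt3 {N : ℕ} (hN : 2 ≤ N) (d : Fin N → Fin N → ℝ≥0∞)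
    (hseq : ∀ i j : Fin N, i < j → d i j = ⊤)
    (htri : ∀ i j k : Fin N,
      (min (d i j) (d j i) = 0 → min (d j k) (d k j) = 0 → min (d i k) (d k i) = 0) ∧
      (min (d i j) (d j i) ≠ ⊤ → min (d j k) (d k j) ≠ ⊤ → min (d i k) (d k i) ≠ ⊤))
    (A : Set ℝ≥0∞) (hA : A = ∅ ∨ A = {0} ∨ A = {x : ℝ≥0∞ | x ≠ ⊤})
    (a α : ℝ) (ha : 0 < a) (hα : 0 < α)
    (f : ℝ≥0∞ → ℝ) (hf : f = A.indicator fun _ => a) :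
    MarginallyInvariant d f α :=
  DDCRP.main_thm d hseq htri A hA a α ha hα f hf
end
end

section
/- Let f : [0,∞] → [0,∞) be non-increasing with nonnegative finite values and f(∞)=0, and let α > 0. Suppose that for every N ≥ 1 and every set of distances d(i,j) ∈ [0,∞] on N customers (sequential or not, subject to the relaxed triangle inequality), the ddCRP with decay f and parameter α is marginally invariant. Then f is identically 0, i.e. f(x) = 0 for all x ∈ [0,∞]. -/
open scoped BigOperators ENNReal Classical

noncomputable section

/-- The relaxed triangle inequality for `d̄ i j = min (d i j) (d j i)`: zero distances
chain to zero distances, and finite distances chain to finite distances. -/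
def RelaxedTriangle {N : ℕ} (d : Fin N → Fin N → ℝ≥0∞) : Prop :=
  ∀ i j k : Fin N,
    (min (d i j) (d j i) = 0 → min (d j k) (d k j) = 0 → min (d i k) (d k i) = 0) ∧
    (min (d i j) (d j i) ≠ ⊤ → min (d j k) (d k j) ≠ ⊤ → min (d i k) (d k i) ≠ ⊤)

lemma sameTable_step {N : ℕ} (c : Fin N → Fin N) (a : Fin N) :
    sameTable c a (c a) := Relation.EqvGen.rel _ _ rfl

lemma sameTable_refl {N : ℕ} (c : Fin N → Fin N) (a : Fin N) :
    sameTable c a a := Relation.EqvGen.refl a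

lemma sameTable_symm {N : ℕ} {c : Fin N → Fin N} {a b : Fin N}
    (h : sameTable c a b) : sameTable c b a := Relation.EqvGen.symm _ _ h

lemma sameTable_trans {N : ℕ} {c : Fin N → Fin N} {a b e : Fin N}
    (h : sameTable c a b) (h' : sameTable c b e) : sameTable c a e :=
  Relation.EqvGen.trans _ _ _ h h'

lemma sameTable_color {N : ℕ} (c : Fin N → Fin N) (g : Fin N → ℕ)
    (hg : ∀ a, g (c a) = g a) {i j : Fin N} (h : sameTable c i j) : g i = g j := by
  induction h with
  | rel a b hab => exact hab ▸ (hg a).symm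
  | refl a => rfl
  | symm a b _ ih => exact ih.symm
  | trans a b e _ _ ih1 ih2 => exact ih1.trans ih2

lemma fin3_cases (b : Fin 3) : b = 0 ∨ b = 1 ∨ b = 2 := by revert b; decide

lemma lemA (c : Fin 3 → Fin 3) :
    deleteCustomer 2 (tablePartition c) = ({{0}, {1}} : Set (Set (Fin 3))) ↔
      ¬ sameTable c 0 1 := by
  constructor
  · intro h hst
    have hB : ({j | sameTable c 0 j} \ {2} : Set (Fin 3)) ∈
        deleteCustomer 2 (tablePartition c) := by
      refine ⟨⟨0, sameTable_refl c 0, by decide⟩, _, ⟨0, rfl⟩, rfl⟩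
    rw [h] at hB
    have h1 : (1 : Fin 3) ∈ ({j | sameTable c 0 j} \ {2} : Set (Fin 3)) :=
      ⟨hst, by decide⟩
    have h0 : (0 : Fin 3) ∈ ({j | sameTable c 0 j} \ {2} : Set (Fin 3)) :=
      ⟨sameTable_refl c 0, by decide⟩
    rcases hB with hB | hB
    · rw [hB] at h1; exact absurd h1 (by decide)
    · rw [Set.mem_singleton_iff] at hB
      rw [hB] at h0; exact absurd h0 (by decide)
  · intro hn
    ext B
    constructor
    · rintro ⟨hne, C, ⟨i, rfl⟩, rfl⟩
      obtain ⟨b, hb, hb2⟩ := hne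
      have hb' : b = 0 ∨ b = 1 := by
        rcases fin3_cases b with h | h | h
        · exact Or.inl h
        · exact Or.inr h
        · exact absurd h (by simpa using hb2)
      rcases hb' with rfl | rfl
      · left
        ext y
        constructor
        · rintro ⟨hy, hy2⟩
          rcases fin3_cases y with h | h | h
          · exact h
          · exfalso; subst h
            exact hn (sameTable_trans (sameTable_symm hb) hy)
          · exact absurd h (by simpa using hy2)
        · rintro rfl; exact ⟨hb, hb2⟩
      · right
        rw [Set.mem_singleton_iff]
        ext y
        constructor
        · rintro ⟨hy, hy2⟩
          rcases fin3_cases y with h | h | h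
          · exfalso; subst h
            exact hn (sameTable_symm (sameTable_trans (sameTable_symm hb) hy))
          · exact h
          · exact absurd h (by simpa using hy2)
        · rintro rfl; exact ⟨hb, hb2⟩
    · intro hB
      rcases hB with hB | hB
      · subst hB
        refine ⟨⟨0, rfl⟩, {j | sameTable c 0 j}, ⟨0, rfl⟩, ?_⟩
        ext y
        constructor
        · rintro rfl; exact ⟨sameTable_refl c 0, by decide⟩
        · rintro ⟨hy, hy2⟩
          rcases fin3_cases y with h | h | h
          · exact h
          · exfalso; subst h; exact hn hy
          · exact absurd h (by simpa using hy2)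
      · rw [Set.mem_singleton_iff] at hB
        subst hB
        refine ⟨⟨1, rfl⟩, {j | sameTable c 1 j}, ⟨1, rfl⟩, ?_⟩
        ext y
        constructor
        · rintro rfl; exact ⟨sameTable_refl c 1, by decide⟩
        · rintro ⟨hy, hy2⟩
          rcases fin3_cases y with h | h | h
          · exfalso; subst h; exact hn (sameTable_symm hy)
          · exact h
          · exact absurd h (by simpa using hy2)

lemma lemB (c : Fin 3 → Fin 3) (h2 : c 2 = 2) (h0 : c 0 ≠ 2) (h1 : c 1 ≠ 2) :
    tablePartition c \ {({2} : Set (Fin 3))} = ({{0}, {1}} : Set (Set (Fin 3))) ↔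
      ¬ sameTable c 0 1 := by
  have hg : ∀ a, (fun z : Fin 3 => if z = 2 then (1:ℕ) else 0) (c a)
      = (fun z : Fin 3 => if z = 2 then (1:ℕ) else 0) a := by
    intro a
    rcases fin3_cases a with rfl | rfl | rfl
    · simp [h0]
    · simp [h1]
    · simp [h2]
  have hnot02 : ¬ sameTable c 0 2 := fun h => by
    have := sameTable_color c (fun z : Fin 3 => if z = 2 then (1:ℕ) else 0) hg h
    simp at this
  have hnot12 : ¬ sameTable c 1 2 := fun h => by
    have := sameTable_color c (fun z : Fin 3 => if z = 2 then (1:ℕ) else 0) hg h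
    simp at this
  constructor
  · intro h hst
    have hB : ({j | sameTable c 0 j} : Set (Fin 3)) ∈
        tablePartition c \ {({2} : Set (Fin 3))} := by
      refine ⟨⟨0, rfl⟩, ?_⟩
      intro hC
      rw [Set.mem_singleton_iff] at hC
      have : (0 : Fin 3) ∈ ({j | sameTable c 0 j} : Set (Fin 3)) := sameTable_refl c 0
      rw [hC] at this
      exact absurd this (by decide)
    rw [h] at hB
    rcases hB with hB | hB
    · have : (1 : Fin 3) ∈ ({j | sameTable c 0 j} : Set (Fin 3)) := hst
      rw [hB] at this; exact absurd this (by decide)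
    · rw [Set.mem_singleton_iff] at hB
      have : (0 : Fin 3) ∈ ({j | sameTable c 0 j} : Set (Fin 3)) := sameTable_refl c 0
      rw [hB] at this; exact absurd this (by decide)
  · intro hn
    have class0 : ({j | sameTable c 0 j} : Set (Fin 3)) = {0} := by
      ext y
      constructor
      · intro hy
        rcases fin3_cases y with h | h | h
        · exact h
        · exfalso; subst h; exact hn hy
        · exfalso; subst h; exact hnot02 hy
      · rintro rfl; exact sameTable_refl c 0
    have class1 : ({j | sameTable c 1 j} : Set (Fin 3)) = {1} := by
      ext y
      constructor
      · intro hy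
        rcases fin3_cases y with h | h | h
        · exfalso; subst h; exact hn (sameTable_symm hy)
        · exact h
        · exfalso; subst h; exact hnot12 hy
      · rintro rfl; exact sameTable_refl c 1
    have class2 : ({j | sameTable c 2 j} : Set (Fin 3)) = {2} := by
      ext y
      constructor
      · intro hy
        rcases fin3_cases y with h | h | h
        · exfalso; subst h; exact hnot02 (sameTable_symm hy)
        · exfalso; subst h; exact hnot12 (sameTable_symm hy)
        · exact h
      · rintro rfl; exact sameTable_refl c 2
    ext B
    constructor
    · rintro ⟨⟨i, rfl⟩, hB2⟩
      rcases fin3_cases i with rfl | rfl | rfl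
      · rw [class0]; left; rfl
      · rw [class1]; right; rfl
      · exfalso; exact hB2 (by rw [class2]; rfl)
    · intro hB
      rcases hB with hB | hB
      · subst hB
        refine ⟨⟨0, class0.symm⟩, ?_⟩
        intro hC
        rw [Set.mem_singleton_iff] at hC
        rw [Set.ext_iff] at hC
        have := hC 0
        simp at this
      · rw [Set.mem_singleton_iff] at hB
        subst hB
        refine ⟨⟨1, class1.symm⟩, ?_⟩
        intro hC
        rw [Set.mem_singleton_iff] at hC
        rw [Set.ext_iff] at hC
        have := hC 1
        simp at this

lemma sum3 {M : Type*} [AddCommMonoid M] (F : (Fin 3 → Fin 3) → M) :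
    ∑ c : Fin 3 → Fin 3, F c
      = ∑ i : Fin 3, ∑ j : Fin 3, ∑ k : Fin 3, F ![i, j, k] := by
  rw [← Equiv.sum_comp
    (⟨fun t => ![t.1, t.2.1, t.2.2], fun c => (c 0, c 1, c 2),
      fun t => rfl, fun c => by funext i; fin_cases i <;> rfl⟩ :
      (Fin 3 × Fin 3 × Fin 3) ≃ (Fin 3 → Fin 3)) F]
  simp only [Fintype.sum_prod_type]
  rfl

/-- if a decay function `f` (non-increasing, nonnegative finite values,
`f ⊤ = 0`) makes the ddCRP with parameter `α > 0` marginally invariant for every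
`N ≥ 1` and every set of distances (sequential or not) satisfying the relaxed
triangle inequality, then `f` is identically `0`. -/
theorem stmt6 (f : ℝ≥0∞ → ℝ) (hf_anti : Antitone f) (hf_nonneg : ∀ x, 0 ≤ f x)
    (hf_top : f ⊤ = 0) (α : ℝ) (hα : 0 < α)
    (H : ∀ N : ℕ, 1 ≤ N → ∀ d : Fin N → Fin N → ℝ≥0∞,
      RelaxedTriangle d → MarginallyInvariant d f α) :
    ∀ x : ℝ≥0∞, f x = 0 := by
  intro x
  rcases eq_or_ne x ⊤ with rfl | hx
  · exact hf_top
  set a := f x with ha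
  have ha0 : 0 ≤ a := hf_nonneg x
  have hαa : α + a ≠ 0 := by positivity
  have hα0 : α ≠ 0 := ne_of_gt hα
  set d : Fin 3 → Fin 3 → ℝ≥0∞ := ![![0, ⊤, x], ![x, 0, ⊤], ![⊤, x, 0]] with hd
  have hdm : ∀ i j : Fin 3, min (d i j) (d j i) = if i = j then 0 else x := by
    intro i j; fin_cases i <;> fin_cases j <;> simp [hd]
  have htri : RelaxedTriangle d := by
    intro i j k
    simp only [hdm]
    constructor
    · intro hij hjk
      by_cases hik : i = k
      · simp [hik]
      · rw [if_neg hik]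
        by_cases hij' : i = j
        · subst hij'
          rw [if_neg hik] at hjk
          exact hjk
        · rw [if_neg hij'] at hij
          exact hij
    · intro _ _
      split_ifs with h
      · exact ENNReal.zero_ne_top
      · exact hx
  have hden0 : (α + ∑ j ∈ (Finset.univ.erase (0 : Fin 3)), f (d 0 j)) = α + a := by
    have h : (Finset.univ.erase (0 : Fin 3)) = {1, 2} := by decide
    rw [h, Finset.sum_insert (by decide), Finset.sum_singleton]
    simp [hd, hf_top, ha]
  have hden1 : (α + ∑ j ∈ (Finset.univ.erase (1 : Fin 3)), f (d 1 j)) = α + a := by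
    have h : (Finset.univ.erase (1 : Fin 3)) = {0, 2} := by decide
    rw [h, Finset.sum_insert (by decide), Finset.sum_singleton]
    simp [hd, hf_top, ha]
  have hden2 : (α + ∑ j ∈ (Finset.univ.erase (2 : Fin 3)), f (d 2 j)) = α + a := by
    have h : (Finset.univ.erase (2 : Fin 3)) = {0, 1} := by decide
    rw [h, Finset.sum_insert (by decide), Finset.sum_singleton]
    simp [hd, hf_top, ha]
  have hProb : ∀ c : Fin 3 → Fin 3, ddcrpProb d f α c
      = (ddcrpWeight d f α 0 (c 0) / (α + a)) * ((ddcrpWeight d f α 1 (c 1) / (α + a))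
          * (ddcrpWeight d f α 2 (c 2) / (α + a))) := by
    intro c
    rw [ddcrpProb, ddcrpProbOn, Fin.prod_univ_three, hden0, hden1, hden2]
    ring
  have hPzero : ∀ c : Fin 3 → Fin 3, (c 0 = 1 ∨ c 1 = 2 ∨ c 2 = 0) →
      ddcrpProb d f α c = 0 := by
    intro c hc
    rw [hProb c]
    rcases hc with h | h | h
    · rw [h]; simp [ddcrpWeight, hd, hf_top]
    · rw [h]; simp [ddcrpWeight, hd, hf_top]
    · rw [h]; simp [ddcrpWeight, hd, hf_top]
  have hdenR0 : (α + ∑ j ∈ ((Finset.univ.erase (2:Fin 3)).erase (0 : Fin 3)), f (d 0 j)) = α := by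
    have h : ((Finset.univ.erase (2:Fin 3)).erase (0 : Fin 3)) = {1} := by decide
    rw [h, Finset.sum_singleton]
    simp [hd, hf_top]
  have hdenR1 : (α + ∑ j ∈ ((Finset.univ.erase (2:Fin 3)).erase (1 : Fin 3)), f (d 1 j)) = α + a := by
    have h : ((Finset.univ.erase (2:Fin 3)).erase (1 : Fin 3)) = {0} := by decide
    rw [h, Finset.sum_singleton]
    simp [hd, ha]
  have hProbR : ∀ c : Fin 3 → Fin 3, ddcrpProbOn (Finset.univ.erase 2) d f α c
      = (ddcrpWeight d f α 0 (c 0) / α) * (ddcrpWeight d f α 1 (c 1) / (α + a)) := by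
    intro c
    have huniv : (Finset.univ.erase (2:Fin 3)) = {0, 1} := by decide
    rw [ddcrpProbOn, Finset.prod_congr huniv (fun i _ => rfl),
      Finset.prod_insert (by decide), Finset.prod_singleton, hdenR0, hdenR1]
  have hPZeroR : ∀ c : Fin 3 → Fin 3, (c 0 = 1 ∨ c 1 = 2) →
      ddcrpProbOn (Finset.univ.erase 2) d f α c = 0 := by
    intro c hc
    rw [hProbR c]
    rcases hc with h | h
    · rw [h]; simp [ddcrpWeight, hd, hf_top]
    · rw [h]; simp [ddcrpWeight, hd, hf_top]
  have key := H 3 (by norm_num) d htri 2 ({{0}, {1}} : Set (Set (Fin 3)))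
  have eqL : (∑ c : Fin 3 → Fin 3,
      Set.indicator {c | deleteCustomer 2 (tablePartition c) = ({{0}, {1}} : Set (Set (Fin 3)))}
        (ddcrpProb d f α) c)
      = (α * α * α + α * α * a + a * α * α) / ((α + a) * ((α + a) * (α + a))) := by
    rw [sum3]
    simp only [Fin.sum_univ_three]
    have hL000 : Set.indicator {c : Fin 3 → Fin 3 | deleteCustomer 2 (tablePartition c) = ({{0}, {1}} : Set (Set (Fin 3)))} (ddcrpProb d f α) ![0,0,0] = 0 :=
      Set.indicator_apply_eq_zero.mpr (fun _ => hPzero ![0,0,0] (by decide))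
    have hL001 : Set.indicator {c : Fin 3 → Fin 3 | deleteCustomer 2 (tablePartition c) = ({{0}, {1}} : Set (Set (Fin 3)))} (ddcrpProb d f α) ![0,0,1] = 0 := by
      refine Set.indicator_of_notMem ?_ _
      intro hm
      exact absurd (sameTable_symm (sameTable_step ![0,0,1] 1)) ((lemA ![0,0,1]).1 hm)
    have hL002 : Set.indicator {c : Fin 3 → Fin 3 | deleteCustomer 2 (tablePartition c) = ({{0}, {1}} : Set (Set (Fin 3)))} (ddcrpProb d f α) ![0,0,2] = 0 := by
      refine Set.indicator_of_notMem ?_ _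
      intro hm
      exact absurd (sameTable_symm (sameTable_step ![0,0,2] 1)) ((lemA ![0,0,2]).1 hm)
    have hL010 : Set.indicator {c : Fin 3 → Fin 3 | deleteCustomer 2 (tablePartition c) = ({{0}, {1}} : Set (Set (Fin 3)))} (ddcrpProb d f α) ![0,1,0] = 0 :=
      Set.indicator_apply_eq_zero.mpr (fun _ => hPzero ![0,1,0] (by decide))
    have hL011 : Set.indicator {c : Fin 3 → Fin 3 | deleteCustomer 2 (tablePartition c) = ({{0}, {1}} : Set (Set (Fin 3)))} (ddcrpProb d f α) ![0,1,1] = ddcrpProb d f α ![0,1,1] := by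
      refine Set.indicator_of_mem ?_ _
      exact (lemA ![0,1,1]).2 (fun h => absurd (sameTable_color ![0,1,1] (![0,1,1] : Fin 3 → ℕ) (by decide) h) (by decide))
    have hL012 : Set.indicator {c : Fin 3 → Fin 3 | deleteCustomer 2 (tablePartition c) = ({{0}, {1}} : Set (Set (Fin 3)))} (ddcrpProb d f α) ![0,1,2] = ddcrpProb d f α ![0,1,2] := by
      refine Set.indicator_of_mem ?_ _
      exact (lemA ![0,1,2]).2 (fun h => absurd (sameTable_color ![0,1,2] (![0,1,0] : Fin 3 → ℕ) (by decide) h) (by decide))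
    have hL020 : Set.indicator {c : Fin 3 → Fin 3 | deleteCustomer 2 (tablePartition c) = ({{0}, {1}} : Set (Set (Fin 3)))} (ddcrpProb d f α) ![0,2,0] = 0 :=
      Set.indicator_apply_eq_zero.mpr (fun _ => hPzero ![0,2,0] (by decide))
    have hL021 : Set.indicator {c : Fin 3 → Fin 3 | deleteCustomer 2 (tablePartition c) = ({{0}, {1}} : Set (Set (Fin 3)))} (ddcrpProb d f α) ![0,2,1] = 0 :=
      Set.indicator_apply_eq_zero.mpr (fun _ => hPzero ![0,2,1] (by decide))
    have hL022 : Set.indicator {c : Fin 3 → Fin 3 | deleteCustomer 2 (tablePartition c) = ({{0}, {1}} : Set (Set (Fin 3)))} (ddcrpProb d f α) ![0,2,2] = 0 :=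
      Set.indicator_apply_eq_zero.mpr (fun _ => hPzero ![0,2,2] (by decide))
    have hL100 : Set.indicator {c : Fin 3 → Fin 3 | deleteCustomer 2 (tablePartition c) = ({{0}, {1}} : Set (Set (Fin 3)))} (ddcrpProb d f α) ![1,0,0] = 0 :=
      Set.indicator_apply_eq_zero.mpr (fun _ => hPzero ![1,0,0] (by decide))
    have hL101 : Set.indicator {c : Fin 3 → Fin 3 | deleteCustomer 2 (tablePartition c) = ({{0}, {1}} : Set (Set (Fin 3)))} (ddcrpProb d f α) ![1,0,1] = 0 :=
      Set.indicator_apply_eq_zero.mpr (fun _ => hPzero ![1,0,1] (by decide))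
    have hL102 : Set.indicator {c : Fin 3 → Fin 3 | deleteCustomer 2 (tablePartition c) = ({{0}, {1}} : Set (Set (Fin 3)))} (ddcrpProb d f α) ![1,0,2] = 0 :=
      Set.indicator_apply_eq_zero.mpr (fun _ => hPzero ![1,0,2] (by decide))
    have hL110 : Set.indicator {c : Fin 3 → Fin 3 | deleteCustomer 2 (tablePartition c) = ({{0}, {1}} : Set (Set (Fin 3)))} (ddcrpProb d f α) ![1,1,0] = 0 :=
      Set.indicator_apply_eq_zero.mpr (fun _ => hPzero ![1,1,0] (by decide))
    have hL111 : Set.indicator {c : Fin 3 → Fin 3 | deleteCustomer 2 (tablePartition c) = ({{0}, {1}} : Set (Set (Fin 3)))} (ddcrpProb d f α) ![1,1,1] = 0 :=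
      Set.indicator_apply_eq_zero.mpr (fun _ => hPzero ![1,1,1] (by decide))
    have hL112 : Set.indicator {c : Fin 3 → Fin 3 | deleteCustomer 2 (tablePartition c) = ({{0}, {1}} : Set (Set (Fin 3)))} (ddcrpProb d f α) ![1,1,2] = 0 :=
      Set.indicator_apply_eq_zero.mpr (fun _ => hPzero ![1,1,2] (by decide))
    have hL120 : Set.indicator {c : Fin 3 → Fin 3 | deleteCustomer 2 (tablePartition c) = ({{0}, {1}} : Set (Set (Fin 3)))} (ddcrpProb d f α) ![1,2,0] = 0 :=
      Set.indicator_apply_eq_zero.mpr (fun _ => hPzero ![1,2,0] (by decide))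
    have hL121 : Set.indicator {c : Fin 3 → Fin 3 | deleteCustomer 2 (tablePartition c) = ({{0}, {1}} : Set (Set (Fin 3)))} (ddcrpProb d f α) ![1,2,1] = 0 :=
      Set.indicator_apply_eq_zero.mpr (fun _ => hPzero ![1,2,1] (by decide))
    have hL122 : Set.indicator {c : Fin 3 → Fin 3 | deleteCustomer 2 (tablePartition c) = ({{0}, {1}} : Set (Set (Fin 3)))} (ddcrpProb d f α) ![1,2,2] = 0 :=
      Set.indicator_apply_eq_zero.mpr (fun _ => hPzero ![1,2,2] (by decide))
    have hL200 : Set.indicator {c : Fin 3 → Fin 3 | deleteCustomer 2 (tablePartition c) = ({{0}, {1}} : Set (Set (Fin 3)))} (ddcrpProb d f α) ![2,0,0] = 0 :=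
      Set.indicator_apply_eq_zero.mpr (fun _ => hPzero ![2,0,0] (by decide))
    have hL201 : Set.indicator {c : Fin 3 → Fin 3 | deleteCustomer 2 (tablePartition c) = ({{0}, {1}} : Set (Set (Fin 3)))} (ddcrpProb d f α) ![2,0,1] = 0 := by
      refine Set.indicator_of_notMem ?_ _
      intro hm
      exact absurd (sameTable_symm (sameTable_step ![2,0,1] 1)) ((lemA ![2,0,1]).1 hm)
    have hL202 : Set.indicator {c : Fin 3 → Fin 3 | deleteCustomer 2 (tablePartition c) = ({{0}, {1}} : Set (Set (Fin 3)))} (ddcrpProb d f α) ![2,0,2] = 0 := by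
      refine Set.indicator_of_notMem ?_ _
      intro hm
      exact absurd (sameTable_symm (sameTable_step ![2,0,2] 1)) ((lemA ![2,0,2]).1 hm)
    have hL210 : Set.indicator {c : Fin 3 → Fin 3 | deleteCustomer 2 (tablePartition c) = ({{0}, {1}} : Set (Set (Fin 3)))} (ddcrpProb d f α) ![2,1,0] = 0 :=
      Set.indicator_apply_eq_zero.mpr (fun _ => hPzero ![2,1,0] (by decide))
    have hL211 : Set.indicator {c : Fin 3 → Fin 3 | deleteCustomer 2 (tablePartition c) = ({{0}, {1}} : Set (Set (Fin 3)))} (ddcrpProb d f α) ![2,1,1] = 0 := by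
      refine Set.indicator_of_notMem ?_ _
      intro hm
      exact absurd (sameTable_trans (sameTable_step ![2,1,1] 0) (sameTable_step ![2,1,1] 2)) ((lemA ![2,1,1]).1 hm)
    have hL212 : Set.indicator {c : Fin 3 → Fin 3 | deleteCustomer 2 (tablePartition c) = ({{0}, {1}} : Set (Set (Fin 3)))} (ddcrpProb d f α) ![2,1,2] = ddcrpProb d f α ![2,1,2] := by
      refine Set.indicator_of_mem ?_ _
      exact (lemA ![2,1,2]).2 (fun h => absurd (sameTable_color ![2,1,2] (![0,1,0] : Fin 3 → ℕ) (by decide) h) (by decide))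
    have hL220 : Set.indicator {c : Fin 3 → Fin 3 | deleteCustomer 2 (tablePartition c) = ({{0}, {1}} : Set (Set (Fin 3)))} (ddcrpProb d f α) ![2,2,0] = 0 :=
      Set.indicator_apply_eq_zero.mpr (fun _ => hPzero ![2,2,0] (by decide))
    have hL221 : Set.indicator {c : Fin 3 → Fin 3 | deleteCustomer 2 (tablePartition c) = ({{0}, {1}} : Set (Set (Fin 3)))} (ddcrpProb d f α) ![2,2,1] = 0 :=
      Set.indicator_apply_eq_zero.mpr (fun _ => hPzero ![2,2,1] (by decide))
    have hL222 : Set.indicator {c : Fin 3 → Fin 3 | deleteCustomer 2 (tablePartition c) = ({{0}, {1}} : Set (Set (Fin 3)))} (ddcrpProb d f α) ![2,2,2] = 0 :=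
      Set.indicator_apply_eq_zero.mpr (fun _ => hPzero ![2,2,2] (by decide))
    rw [hL000, hL001, hL002, hL010, hL011, hL012, hL020, hL021, hL022, hL100, hL101, hL102, hL110, hL111, hL112, hL120, hL121, hL122, hL200, hL201, hL202, hL210, hL211, hL212, hL220, hL221, hL222]
    rw [hProb ![0,1,1], hProb ![0,1,2], hProb ![2,1,2]]
    simp [ddcrpWeight, hd]
    rw [← ha]
    field_simp
    ring
  have eqR : (∑ c : Fin 3 → Fin 3,
      Set.indicator {c | c 2 = 2 ∧ (∀ i : Fin 3, i ≠ 2 → c i ≠ 2) ∧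
          tablePartition c \ {({2} : Set (Fin 3))} = ({{0}, {1}} : Set (Set (Fin 3)))}
        (ddcrpProbOn (Finset.univ.erase 2) d f α) c)
      = α / (α + a) := by
    rw [sum3]
    simp only [Fin.sum_univ_three]
    have hR000 : Set.indicator {c : Fin 3 → Fin 3 | c 2 = 2 ∧ (∀ i : Fin 3, i ≠ 2 → c i ≠ 2) ∧ tablePartition c \ {({2} : Set (Fin 3))} = ({{0}, {1}} : Set (Set (Fin 3)))} (ddcrpProbOn (Finset.univ.erase 2) d f α) ![0,0,0] = 0 := by
      refine Set.indicator_of_notMem ?_ _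
      intro hm
      exact absurd hm.1 (by decide)
    have hR001 : Set.indicator {c : Fin 3 → Fin 3 | c 2 = 2 ∧ (∀ i : Fin 3, i ≠ 2 → c i ≠ 2) ∧ tablePartition c \ {({2} : Set (Fin 3))} = ({{0}, {1}} : Set (Set (Fin 3)))} (ddcrpProbOn (Finset.univ.erase 2) d f α) ![0,0,1] = 0 := by
      refine Set.indicator_of_notMem ?_ _
      intro hm
      exact absurd hm.1 (by decide)
    have hR002 : Set.indicator {c : Fin 3 → Fin 3 | c 2 = 2 ∧ (∀ i : Fin 3, i ≠ 2 → c i ≠ 2) ∧ tablePartition c \ {({2} : Set (Fin 3))} = ({{0}, {1}} : Set (Set (Fin 3)))} (ddcrpProbOn (Finset.univ.erase 2) d f α) ![0,0,2] = 0 := by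
      refine Set.indicator_of_notMem ?_ _
      intro hm
      exact absurd (sameTable_symm (sameTable_step ![0,0,2] 1)) ((lemB ![0,0,2] rfl (by decide) (by decide)).1 hm.2.2)
    have hR010 : Set.indicator {c : Fin 3 → Fin 3 | c 2 = 2 ∧ (∀ i : Fin 3, i ≠ 2 → c i ≠ 2) ∧ tablePartition c \ {({2} : Set (Fin 3))} = ({{0}, {1}} : Set (Set (Fin 3)))} (ddcrpProbOn (Finset.univ.erase 2) d f α) ![0,1,0] = 0 := by
      refine Set.indicator_of_notMem ?_ _
      intro hm
      exact absurd hm.1 (by decide)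
    have hR011 : Set.indicator {c : Fin 3 → Fin 3 | c 2 = 2 ∧ (∀ i : Fin 3, i ≠ 2 → c i ≠ 2) ∧ tablePartition c \ {({2} : Set (Fin 3))} = ({{0}, {1}} : Set (Set (Fin 3)))} (ddcrpProbOn (Finset.univ.erase 2) d f α) ![0,1,1] = 0 := by
      refine Set.indicator_of_notMem ?_ _
      intro hm
      exact absurd hm.1 (by decide)
    have hR012 : Set.indicator {c : Fin 3 → Fin 3 | c 2 = 2 ∧ (∀ i : Fin 3, i ≠ 2 → c i ≠ 2) ∧ tablePartition c \ {({2} : Set (Fin 3))} = ({{0}, {1}} : Set (Set (Fin 3)))} (ddcrpProbOn (Finset.univ.erase 2) d f α) ![0,1,2] = ddcrpProbOn (Finset.univ.erase 2) d f α ![0,1,2] := by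
      refine Set.indicator_of_mem ?_ _
      exact ⟨rfl, by decide, (lemB ![0,1,2] rfl (by decide) (by decide)).2 (fun h => absurd (sameTable_color ![0,1,2] (![0,1,0] : Fin 3 → ℕ) (by decide) h) (by decide))⟩
    have hR020 : Set.indicator {c : Fin 3 → Fin 3 | c 2 = 2 ∧ (∀ i : Fin 3, i ≠ 2 → c i ≠ 2) ∧ tablePartition c \ {({2} : Set (Fin 3))} = ({{0}, {1}} : Set (Set (Fin 3)))} (ddcrpProbOn (Finset.univ.erase 2) d f α) ![0,2,0] = 0 := by
      refine Set.indicator_of_notMem ?_ _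
      intro hm
      exact absurd hm.1 (by decide)
    have hR021 : Set.indicator {c : Fin 3 → Fin 3 | c 2 = 2 ∧ (∀ i : Fin 3, i ≠ 2 → c i ≠ 2) ∧ tablePartition c \ {({2} : Set (Fin 3))} = ({{0}, {1}} : Set (Set (Fin 3)))} (ddcrpProbOn (Finset.univ.erase 2) d f α) ![0,2,1] = 0 := by
      refine Set.indicator_of_notMem ?_ _
      intro hm
      exact absurd hm.1 (by decide)
    have hR022 : Set.indicator {c : Fin 3 → Fin 3 | c 2 = 2 ∧ (∀ i : Fin 3, i ≠ 2 → c i ≠ 2) ∧ tablePartition c \ {({2} : Set (Fin 3))} = ({{0}, {1}} : Set (Set (Fin 3)))} (ddcrpProbOn (Finset.univ.erase 2) d f α) ![0,2,2] = 0 :=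
      Set.indicator_apply_eq_zero.mpr (fun _ => hPZeroR ![0,2,2] (by decide))
    have hR100 : Set.indicator {c : Fin 3 → Fin 3 | c 2 = 2 ∧ (∀ i : Fin 3, i ≠ 2 → c i ≠ 2) ∧ tablePartition c \ {({2} : Set (Fin 3))} = ({{0}, {1}} : Set (Set (Fin 3)))} (ddcrpProbOn (Finset.univ.erase 2) d f α) ![1,0,0] = 0 := by
      refine Set.indicator_of_notMem ?_ _
      intro hm
      exact absurd hm.1 (by decide)
    have hR101 : Set.indicator {c : Fin 3 → Fin 3 | c 2 = 2 ∧ (∀ i : Fin 3, i ≠ 2 → c i ≠ 2) ∧ tablePartition c \ {({2} : Set (Fin 3))} = ({{0}, {1}} : Set (Set (Fin 3)))} (ddcrpProbOn (Finset.univ.erase 2) d f α) ![1,0,1] = 0 := by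
      refine Set.indicator_of_notMem ?_ _
      intro hm
      exact absurd hm.1 (by decide)
    have hR102 : Set.indicator {c : Fin 3 → Fin 3 | c 2 = 2 ∧ (∀ i : Fin 3, i ≠ 2 → c i ≠ 2) ∧ tablePartition c \ {({2} : Set (Fin 3))} = ({{0}, {1}} : Set (Set (Fin 3)))} (ddcrpProbOn (Finset.univ.erase 2) d f α) ![1,0,2] = 0 :=
      Set.indicator_apply_eq_zero.mpr (fun _ => hPZeroR ![1,0,2] (by decide))
    have hR110 : Set.indicator {c : Fin 3 → Fin 3 | c 2 = 2 ∧ (∀ i : Fin 3, i ≠ 2 → c i ≠ 2) ∧ tablePartition c \ {({2} : Set (Fin 3))} = ({{0}, {1}} : Set (Set (Fin 3)))} (ddcrpProbOn (Finset.univ.erase 2) d f α) ![1,1,0] = 0 := by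
      refine Set.indicator_of_notMem ?_ _
      intro hm
      exact absurd hm.1 (by decide)
    have hR111 : Set.indicator {c : Fin 3 → Fin 3 | c 2 = 2 ∧ (∀ i : Fin 3, i ≠ 2 → c i ≠ 2) ∧ tablePartition c \ {({2} : Set (Fin 3))} = ({{0}, {1}} : Set (Set (Fin 3)))} (ddcrpProbOn (Finset.univ.erase 2) d f α) ![1,1,1] = 0 := by
      refine Set.indicator_of_notMem ?_ _
      intro hm
      exact absurd hm.1 (by decide)
    have hR112 : Set.indicator {c : Fin 3 → Fin 3 | c 2 = 2 ∧ (∀ i : Fin 3, i ≠ 2 → c i ≠ 2) ∧ tablePartition c \ {({2} : Set (Fin 3))} = ({{0}, {1}} : Set (Set (Fin 3)))} (ddcrpProbOn (Finset.univ.erase 2) d f α) ![1,1,2] = 0 :=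
      Set.indicator_apply_eq_zero.mpr (fun _ => hPZeroR ![1,1,2] (by decide))
    have hR120 : Set.indicator {c : Fin 3 → Fin 3 | c 2 = 2 ∧ (∀ i : Fin 3, i ≠ 2 → c i ≠ 2) ∧ tablePartition c \ {({2} : Set (Fin 3))} = ({{0}, {1}} : Set (Set (Fin 3)))} (ddcrpProbOn (Finset.univ.erase 2) d f α) ![1,2,0] = 0 := by
      refine Set.indicator_of_notMem ?_ _
      intro hm
      exact absurd hm.1 (by decide)
    have hR121 : Set.indicator {c : Fin 3 → Fin 3 | c 2 = 2 ∧ (∀ i : Fin 3, i ≠ 2 → c i ≠ 2) ∧ tablePartition c \ {({2} : Set (Fin 3))} = ({{0}, {1}} : Set (Set (Fin 3)))} (ddcrpProbOn (Finset.univ.erase 2) d f α) ![1,2,1] = 0 := by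
      refine Set.indicator_of_notMem ?_ _
      intro hm
      exact absurd hm.1 (by decide)
    have hR122 : Set.indicator {c : Fin 3 → Fin 3 | c 2 = 2 ∧ (∀ i : Fin 3, i ≠ 2 → c i ≠ 2) ∧ tablePartition c \ {({2} : Set (Fin 3))} = ({{0}, {1}} : Set (Set (Fin 3)))} (ddcrpProbOn (Finset.univ.erase 2) d f α) ![1,2,2] = 0 :=
      Set.indicator_apply_eq_zero.mpr (fun _ => hPZeroR ![1,2,2] (by decide))
    have hR200 : Set.indicator {c : Fin 3 → Fin 3 | c 2 = 2 ∧ (∀ i : Fin 3, i ≠ 2 → c i ≠ 2) ∧ tablePartition c \ {({2} : Set (Fin 3))} = ({{0}, {1}} : Set (Set (Fin 3)))} (ddcrpProbOn (Finset.univ.erase 2) d f α) ![2,0,0] = 0 := by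
      refine Set.indicator_of_notMem ?_ _
      intro hm
      exact absurd hm.1 (by decide)
    have hR201 : Set.indicator {c : Fin 3 → Fin 3 | c 2 = 2 ∧ (∀ i : Fin 3, i ≠ 2 → c i ≠ 2) ∧ tablePartition c \ {({2} : Set (Fin 3))} = ({{0}, {1}} : Set (Set (Fin 3)))} (ddcrpProbOn (Finset.univ.erase 2) d f α) ![2,0,1] = 0 := by
      refine Set.indicator_of_notMem ?_ _
      intro hm
      exact absurd hm.1 (by decide)
    have hR202 : Set.indicator {c : Fin 3 → Fin 3 | c 2 = 2 ∧ (∀ i : Fin 3, i ≠ 2 → c i ≠ 2) ∧ tablePartition c \ {({2} : Set (Fin 3))} = ({{0}, {1}} : Set (Set (Fin 3)))} (ddcrpProbOn (Finset.univ.erase 2) d f α) ![2,0,2] = 0 := by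
      refine Set.indicator_of_notMem ?_ _
      intro hm
      exact (hm.2.1 0 (by decide)) rfl
    have hR210 : Set.indicator {c : Fin 3 → Fin 3 | c 2 = 2 ∧ (∀ i : Fin 3, i ≠ 2 → c i ≠ 2) ∧ tablePartition c \ {({2} : Set (Fin 3))} = ({{0}, {1}} : Set (Set (Fin 3)))} (ddcrpProbOn (Finset.univ.erase 2) d f α) ![2,1,0] = 0 := by
      refine Set.indicator_of_notMem ?_ _
      intro hm
      exact absurd hm.1 (by decide)
    have hR211 : Set.indicator {c : Fin 3 → Fin 3 | c 2 = 2 ∧ (∀ i : Fin 3, i ≠ 2 → c i ≠ 2) ∧ tablePartition c \ {({2} : Set (Fin 3))} = ({{0}, {1}} : Set (Set (Fin 3)))} (ddcrpProbOn (Finset.univ.erase 2) d f α) ![2,1,1] = 0 := by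
      refine Set.indicator_of_notMem ?_ _
      intro hm
      exact absurd hm.1 (by decide)
    have hR212 : Set.indicator {c : Fin 3 → Fin 3 | c 2 = 2 ∧ (∀ i : Fin 3, i ≠ 2 → c i ≠ 2) ∧ tablePartition c \ {({2} : Set (Fin 3))} = ({{0}, {1}} : Set (Set (Fin 3)))} (ddcrpProbOn (Finset.univ.erase 2) d f α) ![2,1,2] = 0 := by
      refine Set.indicator_of_notMem ?_ _
      intro hm
      exact (hm.2.1 0 (by decide)) rfl
    have hR220 : Set.indicator {c : Fin 3 → Fin 3 | c 2 = 2 ∧ (∀ i : Fin 3, i ≠ 2 → c i ≠ 2) ∧ tablePartition c \ {({2} : Set (Fin 3))} = ({{0}, {1}} : Set (Set (Fin 3)))} (ddcrpProbOn (Finset.univ.erase 2) d f α) ![2,2,0] = 0 := by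
      refine Set.indicator_of_notMem ?_ _
      intro hm
      exact absurd hm.1 (by decide)
    have hR221 : Set.indicator {c : Fin 3 → Fin 3 | c 2 = 2 ∧ (∀ i : Fin 3, i ≠ 2 → c i ≠ 2) ∧ tablePartition c \ {({2} : Set (Fin 3))} = ({{0}, {1}} : Set (Set (Fin 3)))} (ddcrpProbOn (Finset.univ.erase 2) d f α) ![2,2,1] = 0 := by
      refine Set.indicator_of_notMem ?_ _
      intro hm
      exact absurd hm.1 (by decide)
    have hR222 : Set.indicator {c : Fin 3 → Fin 3 | c 2 = 2 ∧ (∀ i : Fin 3, i ≠ 2 → c i ≠ 2) ∧ tablePartition c \ {({2} : Set (Fin 3))} = ({{0}, {1}} : Set (Set (Fin 3)))} (ddcrpProbOn (Finset.univ.erase 2) d f α) ![2,2,2] = 0 :=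
      Set.indicator_apply_eq_zero.mpr (fun _ => hPZeroR ![2,2,2] (by decide))
    rw [hR000, hR001, hR002, hR010, hR011, hR012, hR020, hR021, hR022, hR100, hR101, hR102, hR110, hR111, hR112, hR120, hR121, hR122, hR200, hR201, hR202, hR210, hR211, hR212, hR220, hR221, hR222]
    rw [hProbR ![0,1,2]]
    simp [ddcrpWeight, hd]
    field_simp
  have keyv : (α * α * α + α * α * a + a * α * α) / ((α + a) * ((α + a) * (α + a))) = α / (α + a) :=
    (eqL.symm.trans key).trans eqR
  have key2 : α * a ^ 2 * (α + a) = 0 := by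
    have h3 : (α * α * α + α * α * a + a * α * α) * (α + a) = α * ((α + a) * ((α + a) * (α + a))) := by
      rw [div_eq_div_iff (by positivity) (by positivity)] at keyv
      linarith [keyv]
    nlinarith [h3]
  have h5 : a ^ 2 = 0 := by
    by_contra hne2
    have hpos : 0 < a ^ 2 := lt_of_le_of_ne (sq_nonneg a) (Ne.symm hne2)
    nlinarith [key2, mul_pos (mul_pos hα hpos) (show (0:ℝ) < α + a by linarith)]
  exact pow_eq_zero_iff (by norm_num) |>.mp h5
end
end
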